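/- arXiv:math/9903143 — 5 statements merged into one kernel-verified Lean document; each statement's English description precedes it below -/
import Mathlib

section
/- Let k be a field, q ∈ k^×, and θ : O_q(M_{m,n}(k)) → O_q(k^m) ⊗_k O_q(k^n) the k-algebra homomorphism with θ(X_{ij}) = y_i ⊗ z_j. Then the kernel of θ is exactly the ideal I_1 generated by the 2×2 quantum minors. -/
open scoped TensorProduct

noncomputable section

/-- Defining relations of the coordinate ring `O_q(k^n)` of quantum affine `n`-space:
`y_i y_j = q y_j y_i` for `i < j`. -/
inductive AffRel (k : Type) [Field k] (q : k) (n : ℕ) :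
    FreeAlgebra k (Fin n) → FreeAlgebra k (Fin n) → Prop
  | rel : ∀ {i j : Fin n}, i < j →
      AffRel k q n (FreeAlgebra.ι k i * FreeAlgebra.ι k j)
        (q • (FreeAlgebra.ι k j * FreeAlgebra.ι k i))

/-- The coordinate ring `O_q(k^n)` of quantum affine `n`-space. -/
abbrev QAff (k : Type) [Field k] (q : k) (n : ℕ) : Type := RingQuot (AffRel k q n)

/-- The canonical generators `y_1, …, y_n` of `O_q(k^n)`. -/
def affGen (k : Type) [Field k] (q : k) (n : ℕ) (i : Fin n) : QAff k q n :=
  RingQuot.mkAlgHom k (AffRel k q n) (FreeAlgebra.ι k i)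

/-- Defining relations of the coordinate ring `O_q(M_{m,n}(k))` of quantum `m × n` matrices. -/
inductive MatRel (k : Type) [Field k] (q : k) (m n : ℕ) :
    FreeAlgebra k (Fin m × Fin n) → FreeAlgebra k (Fin m × Fin n) → Prop
  | col : ∀ {i l : Fin m} {j : Fin n}, i < l →
      MatRel k q m n (FreeAlgebra.ι k (i, j) * FreeAlgebra.ι k (l, j))
        (q • (FreeAlgebra.ι k (l, j) * FreeAlgebra.ι k (i, j)))
  | row : ∀ {i : Fin m} {j s : Fin n}, j < s →
      MatRel k q m n (FreeAlgebra.ι k (i, j) * FreeAlgebra.ι k (i, s))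
        (q • (FreeAlgebra.ι k (i, s) * FreeAlgebra.ι k (i, j)))
  | comm : ∀ {i l : Fin m} {j s : Fin n}, i < l → j < s →
      MatRel k q m n (FreeAlgebra.ι k (i, s) * FreeAlgebra.ι k (l, j))
        (FreeAlgebra.ι k (l, j) * FreeAlgebra.ι k (i, s))
  | mixed : ∀ {i l : Fin m} {j s : Fin n}, i < l → j < s →
      MatRel k q m n
        (FreeAlgebra.ι k (i, j) * FreeAlgebra.ι k (l, s) -
          FreeAlgebra.ι k (l, s) * FreeAlgebra.ι k (i, j))
        ((q - q⁻¹) • (FreeAlgebra.ι k (i, s) * FreeAlgebra.ι k (l, j)))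

/-- The coordinate ring `O_q(M_{m,n}(k))` of quantum `m × n` matrices. -/
abbrev QMat (k : Type) [Field k] (q : k) (m n : ℕ) : Type := RingQuot (MatRel k q m n)

/-- The canonical generators `X i j` of `O_q(M_{m,n}(k))`. -/
def X (k : Type) [Field k] (q : k) (m n : ℕ) (i : Fin m) (j : Fin n) : QMat k q m n :=
  RingQuot.mkAlgHom k (MatRel k q m n) (FreeAlgebra.ι k (i, j))

/-- The two-sided ideal `I₁` of `O_q(M_{m,n}(k))` generated by the `2 × 2` quantum minors
`X_{ij} X_{ls} - q X_{is} X_{lj}` for `i < l`, `j < s`. -/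
def I₁ (k : Type) [Field k] (q : k) (m n : ℕ) : TwoSidedIdeal (QMat k q m n) :=
  TwoSidedIdeal.span
    { a | ∃ (i l : Fin m) (j s : Fin n), i < l ∧ j < s ∧
        a = X k q m n i j * X k q m n l s - q • (X k q m n i s * X k q m n l j) }

/-- The monomial `X_{i₁j₁} X_{i₂j₂} ⋯ X_{iₗjₗ}` associated to a list of index pairs. -/
def matMono (k : Type) [Field k] (q : k) (m n : ℕ) (L : List (Fin m × Fin n)) :
    QMat k q m n :=
  (L.map fun p => X k q m n p.1 p.2).prod

/-- A list of index pairs is *ordered* if the row indices are non-increasing and the column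
indices are non-decreasing, i.e. `i₁ ≥ i₂ ≥ ⋯ ≥ iₗ` and `j₁ ≤ j₂ ≤ ⋯ ≤ jₗ`. -/
def OrderedIdx {m n : ℕ} (L : List (Fin m × Fin n)) : Prop :=
  L.Chain' fun p p' => p'.1 ≤ p.1 ∧ p.2 ≤ p'.2

/-!
`I₁ ⊆ ker θ` because `θ` sends the quantum minor `X_{ij} X_{ls} - q X_{is} X_{lj}` to
`y_i y_l ⊗ (z_j z_s - q z_s z_j) = 0`.

Conversely, call a monomial in the `X_{ij}` ordered if its row indices are non-increasing and its
column indices non-decreasing. For any two generators, one defining relation or one quantum minor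
rewrites `X_u X_v` modulo `I₁` as a multiple of `X_{u'} X_{v'}` with
`u' = (max rows, min columns)` and `v' = (min rows, max columns)`; inserting factors one at a time
in this way shows that the ordered monomials span `O_q(M_{m,n})` modulo `I₁`. Their images
`y_{i₁} ⋯ y_{iₗ} ⊗ z_{j₁} ⋯ z_{jₗ}` are linearly independent: `O_q(k^n)` acts on `k[x_1, …, x_n]` by
letting `y_i` rescale each `x_j` with `j > i` by `q` and then multiply by `x_i`, which sends a
monomial in the `y`'s applied to `1` to a nonzero multiple of the commuting monomial, and an ordered
monomial is determined by the multisets of its row and column indices.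
-/

namespace MvPolynomial

variable {σ k : Type*} [CommSemiring k]

def scaleVars (w : σ → k) : MvPolynomial σ k →ₐ[k] MvPolynomial σ k :=
  aeval fun j => C (w j) * X j

@[simp]
lemma scaleVars_X (w : σ → k) (j : σ) : scaleVars w (X j) = C (w j) * X j :=
  aeval_X _ _

lemma scaleVars_monomial (w : σ → k) (d : σ →₀ ℕ) (a : k) :
    scaleVars w (monomial d a) = monomial d (a * d.prod fun j e => w j ^ e) := by
  rw [scaleVars, aeval_monomial, monomial_eq, C_mul, algebraMap_eq, mul_assoc,
    Finsupp.prod, Finsupp.prod, Finsupp.prod, map_prod, ← Finset.prod_mul_distrib]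
  simp only [mul_pow, map_pow]

lemma scaleVars_comm (w w' : σ → k) (p : MvPolynomial σ k) :
    scaleVars w (scaleVars w' p) = scaleVars w' (scaleVars w p) := by
  have h : (scaleVars w).comp (scaleVars w') = (scaleVars w').comp (scaleVars w) :=
    algHom_ext fun j => by
      simp only [AlgHom.comp_apply, scaleVars_X, map_mul, algHom_C, algebraMap_eq]
      ring
  exact AlgHom.congr_fun h p

end MvPolynomial

namespace List

lemma perm_max_cons_min_cons {α : Type*} [LinearOrder α] (a b : α) (l : List α) :
    (max a b :: min a b :: l).Perm (a :: b :: l) := by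
  rcases le_total a b with h | h
  · rw [max_eq_right h, min_eq_left h]
    exact .swap _ _ _
  · rw [max_eq_left h, min_eq_right h]

end List

theorem LinearMap.ker_eq_of_linearIndependent_comp {R M M' ι : Type*} [Semiring R]
    [AddCommMonoid M] [Module R M] [AddCommMonoid M'] [Module R M'] (f : M →ₗ[R] M') {v : ι → M}
    {p : Submodule R M} (hp : p ≤ LinearMap.ker f) (hspan : Submodule.span R (Set.range v) ⊔ p = ⊤)
    (hv : LinearIndependent R (f ∘ v)) : LinearMap.ker f = p := by
  refine le_antisymm (fun x hx => ?_) hp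
  obtain ⟨s, hs, y, hy, rfl⟩ := Submodule.mem_sup.1 (hspan ▸ Submodule.mem_top : x ∈ _)
  have hfs : f s = 0 := by
    rwa [LinearMap.mem_ker, map_add, LinearMap.mem_ker.1 (hp hy), add_zero] at hx
  rwa [Submodule.disjoint_def.1 (Submodule.range_ker_disjoint hv) s hs hfs, zero_add]

section QuantumAffineSpace

open MvPolynomial

variable {k : Type} [Field k] {q : k} {n : ℕ}

def affGenOp (q : k) (i : Fin n) : Module.End k (MvPolynomial (Fin n) k) :=
  LinearMap.mulLeft k (X i) ∘ₗ (scaleVars fun j => if i < j then q else 1).toLinearMap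

lemma affGenOp_apply (i : Fin n) (p : MvPolynomial (Fin n) k) :
    affGenOp q i p = X i * scaleVars (fun j => if i < j then q else 1) p := rfl

lemma affGenOp_mul_affGenOp {i j : Fin n} (hij : i < j) :
    affGenOp q i * affGenOp q j = q • (affGenOp q j * affGenOp q i) := by
  refine LinearMap.ext fun p => ?_
  simp only [Module.End.mul_apply, LinearMap.smul_apply, affGenOp_apply, map_mul, scaleVars_X,
    if_pos hij, if_neg hij.not_gt, scaleVars_comm (fun t => if i < t then q else 1),
    smul_eq_C_mul, map_one, one_mul]
  ring

lemma affGen_mul_affGen {i j : Fin n} (h : i < j) :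
    affGen k q n i * affGen k q n j = q • (affGen k q n j * affGen k q n i) := by
  simpa only [affGen, map_mul, map_smul] using RingQuot.mkAlgHom_rel k (AffRel.rel (q := q) h)

variable (k q n) in
def affRep : QAff k q n →ₐ[k] Module.End k (MvPolynomial (Fin n) k) :=
  RingQuot.liftAlgHom k ⟨FreeAlgebra.lift k (affGenOp q), by
    rintro _ _ ⟨hij⟩
    simp only [map_mul, map_smul, FreeAlgebra.lift_ι_apply]
    exact affGenOp_mul_affGenOp hij⟩

lemma affRep_affGen (i : Fin n) : affRep k q n (affGen k q n i) = affGenOp q i := by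
  rw [affGen, affRep, RingQuot.liftAlgHom_mkAlgHom_apply, FreeAlgebra.lift_ι_apply]

lemma affGenOp_monomial (i : Fin n) (d : Fin n →₀ ℕ) (a : k) :
    affGenOp q i (monomial d a) =
      monomial (Finsupp.single i 1 + d) (a * d.prod fun j e => (if i < j then q else 1) ^ e) := by
  rw [affGenOp_apply, scaleVars_monomial, MvPolynomial.X, monomial_mul, one_mul]

variable (k q n) in
def affEval : QAff k q n →ₗ[k] MvPolynomial (Fin n) k :=
  LinearMap.applyₗ 1 ∘ₗ (affRep k q n).toLinearMap

lemma exists_affEval_prod_eq_smul_monomial (hq : q ≠ 0) (r : List (Fin n)) :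
    ∃ c : k, c ≠ 0 ∧
      affEval k q n (r.map (affGen k q n)).prod = c • monomial (Multiset.toFinsupp r) 1 := by
  induction r with
  | nil => exact ⟨1, one_ne_zero, by simp [affEval]⟩
  | cons i r ih =>
    obtain ⟨c, hc, hr⟩ := ih
    refine ⟨c * (r : Multiset (Fin n)).toFinsupp.prod fun j e => (if i < j then q else 1) ^ e,
      mul_ne_zero hc (Finsupp.prod_ne_zero_iff.2 fun j _ => ?_), ?_⟩
    · exact pow_ne_zero _ (by split_ifs <;> simp [hq])
    · simp only [affEval, LinearMap.comp_apply, AlgHom.toLinearMap_apply,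
        LinearMap.applyₗ_apply_apply] at hr ⊢
      rw [List.map_cons, List.prod_cons, map_mul, Module.End.mul_apply, hr, affRep_affGen,
        map_smul, affGenOp_monomial, ← Multiset.cons_coe, ← Multiset.singleton_add,
        Multiset.toFinsupp_add, Multiset.toFinsupp_singleton, smul_monomial, smul_monomial, mul_smul]
      simp

end QuantumAffineSpace

section QuantumMatrix

variable {k : Type} [Field k] {q : k} {m n : ℕ}

lemma X_mul_X_same_col {i l : Fin m} (j : Fin n) (h : i < l) :
    X k q m n i j * X k q m n l j = q • (X k q m n l j * X k q m n i j) := by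
  simpa only [X, map_mul, map_smul] using RingQuot.mkAlgHom_rel k (MatRel.col (q := q) (j := j) h)

lemma X_mul_X_same_row (i : Fin m) {j s : Fin n} (h : j < s) :
    X k q m n i j * X k q m n i s = q • (X k q m n i s * X k q m n i j) := by
  simpa only [X, map_mul, map_smul] using RingQuot.mkAlgHom_rel k (MatRel.row (q := q) (i := i) h)

lemma X_antidiag_comm {i l : Fin m} {j s : Fin n} (hi : i < l) (hj : j < s) :
    X k q m n i s * X k q m n l j = X k q m n l j * X k q m n i s := by
  simpa only [X, map_mul] using RingQuot.mkAlgHom_rel k (MatRel.comm (k := k) (q := q) hi hj)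

lemma X_mul_X_sub_X_mul_X {i l : Fin m} {j s : Fin n} (hi : i < l) (hj : j < s) :
    X k q m n i j * X k q m n l s - X k q m n l s * X k q m n i j =
      (q - q⁻¹) • (X k q m n i s * X k q m n l j) := by
  simpa only [X, map_sub, map_mul, map_smul] using
    RingQuot.mkAlgHom_rel k (MatRel.mixed (k := k) (q := q) hi hj)

lemma quantumMinor_mem_I₁ {i l : Fin m} {j s : Fin n} (hi : i < l) (hj : j < s) :
    X k q m n i j * X k q m n l s - q • (X k q m n i s * X k q m n l j) ∈ I₁ k q m n :=
  TwoSidedIdeal.subset_span ⟨i, l, j, s, hi, hj, rfl⟩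

lemma I₁_le_ker (θ : QMat k q m n →ₐ[k] QAff k q m ⊗[k] QAff k q n)
    (hθ : ∀ (i : Fin m) (j : Fin n), θ (X k q m n i j) = affGen k q m i ⊗ₜ[k] affGen k q n j) :
    I₁ k q m n ≤ TwoSidedIdeal.ker θ := by
  rw [I₁, TwoSidedIdeal.span_le]
  rintro _ ⟨i, l, j, s, -, hj, rfl⟩
  rw [SetLike.mem_coe, TwoSidedIdeal.mem_ker, map_sub, map_smul, map_mul, map_mul, hθ, hθ, hθ, hθ,
    Algebra.TensorProduct.tmul_mul_tmul, Algebra.TensorProduct.tmul_mul_tmul,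
    affGen_mul_affGen hj, TensorProduct.tmul_smul, sub_self]

lemma exists_X_mul_X_sub_smul_mem_I₁ (hq : q ≠ 0) (u v : Fin m × Fin n) :
    ∃ c : k, X k q m n u.1 u.2 * X k q m n v.1 v.2 -
      c • (X k q m n (max u.1 v.1) (min u.2 v.2) * X k q m n (min u.1 v.1) (max u.2 v.2)) ∈
        I₁ k q m n := by
  obtain ⟨i, j⟩ := u
  obtain ⟨l, s⟩ := v
  dsimp only
  rcases le_or_gt l i with hr | hr <;> rcases le_or_gt j s with hc | hc
  · refine ⟨1, ?_⟩
    rw [max_eq_left hr, min_eq_left hc, min_eq_right hr, max_eq_right hc, one_smul, sub_self]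
    exact zero_mem _
  · rw [max_eq_left hr, min_eq_right hc.le, min_eq_right hr, max_eq_left hc.le]
    refine ⟨q⁻¹, ?_⟩
    rcases hr.eq_or_lt with rfl | hr
    · rw [X_mul_X_same_row l hc, smul_smul, inv_mul_cancel₀ hq, one_smul, sub_self]
      exact zero_mem _
    · have hmixed : X k q m n i j * X k q m n l s =
          X k q m n l s * X k q m n i j - (q - q⁻¹) • (X k q m n l j * X k q m n i s) := by
        rw [← X_mul_X_sub_X_mul_X hr hc]
        abel
      rw [hmixed, ← X_antidiag_comm hr hc]
      convert quantumMinor_mem_I₁ (k := k) hr hc using 1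
      module
  · rw [max_eq_right hr.le, min_eq_left hc, min_eq_left hr.le, max_eq_right hc]
    refine ⟨q, ?_⟩
    rcases hc.eq_or_lt with rfl | hc
    · rw [X_mul_X_same_col j hr, sub_self]
      exact zero_mem _
    · rw [← X_antidiag_comm hr hc]
      exact quantumMinor_mem_I₁ hr hc
  · refine ⟨1, ?_⟩
    rw [max_eq_right hr.le, min_eq_right hc.le, min_eq_left hr.le, max_eq_left hc.le,
      X_antidiag_comm hr hc, one_smul, sub_self]
    exact zero_mem _

lemma orderedIdx_iff_pairwise {L : List (Fin m × Fin n)} :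
    OrderedIdx L ↔ L.Pairwise fun p p' => p'.1 ≤ p.1 ∧ p.2 ≤ p'.2 :=
  @List.isChain_iff_pairwise _ _ _ ⟨fun h h' => ⟨h'.1.trans h.1, h.2.trans h'.2⟩⟩

lemma matMono_cons (p : Fin m × Fin n) (L : List (Fin m × Fin n)) :
    matMono k q m n (p :: L) = X k q m n p.1 p.2 * matMono k q m n L := by
  rw [matMono, List.map_cons, List.prod_cons, matMono]

lemma exists_ordered_matMono_cons_sub_smul_mem_I₁ (hq : q ≠ 0) (u : Fin m × Fin n)
    {L : List (Fin m × Fin n)} (hL : OrderedIdx L) :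
    ∃ (c : k) (M : List (Fin m × Fin n)), OrderedIdx M ∧
      (M.map Prod.fst).Perm ((u :: L).map Prod.fst) ∧
      (M.map Prod.snd).Perm ((u :: L).map Prod.snd) ∧
      matMono k q m n (u :: L) - c • matMono k q m n M ∈ I₁ k q m n := by
  induction L generalizing u with
  | nil => exact ⟨1, [u], List.isChain_singleton u, .rfl, .rfl, by simp⟩
  | cons v N ih =>
    rw [orderedIdx_iff_pairwise, List.pairwise_cons] at hL
    set u' : Fin m × Fin n := (max u.1 v.1, min u.2 v.2)
    set v' : Fin m × Fin n := (min u.1 v.1, max u.2 v.2)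
    obtain ⟨c₁, hc₁⟩ := exists_X_mul_X_sub_smul_mem_I₁ hq u v
    obtain ⟨c₂, M, hM, hrow, hcol, hc₂⟩ := ih v' (orderedIdx_iff_pairwise.2 hL.2)
    refine ⟨c₁ * c₂, u' :: M, ?_, ?_, ?_, ?_⟩
    · rw [orderedIdx_iff_pairwise, List.pairwise_cons]
      refine ⟨fun p hp => ⟨?_, ?_⟩, orderedIdx_iff_pairwise.1 hM⟩
      · rcases List.mem_cons.1 (hrow.mem_iff.1 (List.mem_map_of_mem hp)) with h | h
        · exact h ▸ min_le_max
        · obtain ⟨r, hr, hr'⟩ := List.mem_map.1 h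
          exact hr' ▸ (hL.1 r hr).1.trans (le_max_right _ _)
      · rcases List.mem_cons.1 (hcol.mem_iff.1 (List.mem_map_of_mem hp)) with h | h
        · exact h ▸ min_le_max
        · obtain ⟨r, hr, hr'⟩ := List.mem_map.1 h
          exact hr' ▸ (min_le_right _ _).trans (hL.1 r hr).2
    · exact (hrow.cons _).trans (List.perm_max_cons_min_cons _ _ _)
    · exact (hcol.cons _).trans ((List.Perm.swap _ _ _).trans (List.perm_max_cons_min_cons _ _ _))
    · have h : matMono k q m n (u :: v :: N) - (c₁ * c₂) • matMono k q m n (u' :: M) =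
          (X k q m n u.1 u.2 * X k q m n v.1 v.2 -
            c₁ • (X k q m n u'.1 u'.2 * X k q m n v'.1 v'.2)) * matMono k q m n N +
          (c₁ • X k q m n u'.1 u'.2) * (matMono k q m n (v' :: N) - c₂ • matMono k q m n M) := by
        simp only [matMono_cons, sub_mul, mul_sub, smul_mul_assoc, mul_smul_comm, mul_assoc]
        module
      rw [h]
      exact add_mem ((I₁ k q m n).mul_mem_right _ _ hc₁) ((I₁ k q m n).mul_mem_left _ _ hc₂)

lemma exists_ordered_matMono_sub_smul_mem_I₁ (hq : q ≠ 0) (L : List (Fin m × Fin n)) :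
    ∃ (c : k) (M : List (Fin m × Fin n)), OrderedIdx M ∧
      matMono k q m n L - c • matMono k q m n M ∈ I₁ k q m n := by
  induction L with
  | nil => exact ⟨1, [], List.isChain_nil, by simp⟩
  | cons u L ih =>
    obtain ⟨c₁, M₁, hM₁, h₁⟩ := ih
    obtain ⟨c₂, M, hM, -, -, h₂⟩ := exists_ordered_matMono_cons_sub_smul_mem_I₁ hq u hM₁
    refine ⟨c₁ * c₂, M, hM, ?_⟩
    have h : matMono k q m n (u :: L) - (c₁ * c₂) • matMono k q m n M =
        X k q m n u.1 u.2 * (matMono k q m n L - c₁ • matMono k q m n M₁) +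
          algebraMap k _ c₁ * (matMono k q m n (u :: M₁) - c₂ • matMono k q m n M) := by
      simp only [matMono_cons, mul_sub, ← Algebra.smul_def, mul_smul_comm]
      module
    rw [h]
    exact add_mem ((I₁ k q m n).mul_mem_left _ _ h₁) ((I₁ k q m n).mul_mem_left _ _ h₂)

lemma span_matMono_eq_top : Submodule.span k (Set.range (matMono k q m n)) = ⊤ := by
  have hadjoin : Algebra.adjoin k (Set.range fun p : Fin m × Fin n => X k q m n p.1 p.2) = ⊤ := by
    rw [show (Set.range fun p : Fin m × Fin n => X k q m n p.1 p.2) =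
        RingQuot.mkAlgHom k (MatRel k q m n) '' Set.range (FreeAlgebra.ι k) by
      rw [← Set.range_comp]; rfl,
      ← AlgHom.map_adjoin, FreeAlgebra.adjoin_range_ι, Algebra.map_top,
      AlgHom.range_eq_top]
    exact RingQuot.mkAlgHom_surjective k _
  rw [eq_top_iff, ← Algebra.top_toSubmodule, ← hadjoin, Algebra.adjoin_eq_span,
    Submodule.span_le, ← FreeMonoid.mrange_lift]
  rintro _ ⟨w, rfl⟩
  exact Submodule.subset_span ⟨w.toList, by rw [FreeMonoid.lift_apply, matMono]⟩

lemma span_ordered_matMono_sup_I₁_eq_top (hq : q ≠ 0) :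
    Submodule.span k (Set.range fun L : {L : List (Fin m × Fin n) // OrderedIdx L} =>
        matMono k q m n L) ⊔ (I₁ k q m n).asIdeal.restrictScalars k = ⊤ := by
  rw [eq_top_iff, ← span_matMono_eq_top, Submodule.span_le]
  rintro _ ⟨L, rfl⟩
  obtain ⟨c, M, hM, h⟩ := exists_ordered_matMono_sub_smul_mem_I₁ hq L
  rw [SetLike.mem_coe, ← sub_add_cancel (matMono k q m n L) (c • matMono k q m n M)]
  exact add_mem (Submodule.mem_sup_right h)
    (Submodule.mem_sup_left (Submodule.smul_mem _ c (Submodule.subset_span ⟨⟨M, hM⟩, rfl⟩)))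

lemma OrderedIdx.eq_of_perm {L L' : List (Fin m × Fin n)} (hL : OrderedIdx L)
    (hL' : OrderedIdx L') (hrow : (L.map Prod.fst).Perm (L'.map Prod.fst))
    (hcol : (L.map Prod.snd).Perm (L'.map Prod.snd)) : L = L' := by
  rw [orderedIdx_iff_pairwise] at hL hL'
  have hrow' := hrow.eq_of_pairwise (le := (· ≥ ·)) (fun _ _ _ _ h h' => le_antisymm h' h)
    (List.pairwise_map.2 (hL.imp And.left)) (List.pairwise_map.2 (hL'.imp And.left))
  have hcol' := hcol.eq_of_pairwise (le := (· ≤ ·)) (fun _ _ _ _ h h' => le_antisymm h h')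
    (List.pairwise_map.2 (hL.imp And.right)) (List.pairwise_map.2 (hL'.imp And.right))
  rw [← L.zip_unzip, ← L'.zip_unzip, List.unzip_fst, List.unzip_snd, List.unzip_fst,
    List.unzip_snd, hrow', hcol']

lemma theta_matMono (θ : QMat k q m n →ₐ[k] QAff k q m ⊗[k] QAff k q n)
    (hθ : ∀ (i : Fin m) (j : Fin n), θ (X k q m n i j) = affGen k q m i ⊗ₜ[k] affGen k q n j)
    (L : List (Fin m × Fin n)) :
    θ (matMono k q m n L) =
      ((L.map Prod.fst).map (affGen k q m)).prod ⊗ₜ ((L.map Prod.snd).map (affGen k q n)).prod := by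
  induction L with
  | nil => simp [matMono, Algebra.TensorProduct.one_def]
  | cons p L ih =>
    simp only [matMono, List.map_cons, List.prod_cons, map_mul] at ih ⊢
    rw [ih, hθ, Algebra.TensorProduct.tmul_mul_tmul]

open MvPolynomial in
lemma linearIndependent_theta_matMono (hq : q ≠ 0)
    (θ : QMat k q m n →ₐ[k] QAff k q m ⊗[k] QAff k q n)
    (hθ : ∀ (i : Fin m) (j : Fin n), θ (X k q m n i j) = affGen k q m i ⊗ₜ[k] affGen k q n j) :
    LinearIndependent k fun L : {L : List (Fin m × Fin n) // OrderedIdx L} =>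
      θ (matMono k q m n L) := by
  let idx (L : {L : List (Fin m × Fin n) // OrderedIdx L}) :=
    (Multiset.toFinsupp (L.1.map Prod.fst : Multiset (Fin m)),
      Multiset.toFinsupp (L.1.map Prod.snd : Multiset (Fin n)))
  have hidx : Function.Injective idx := fun L L' h => by
    simp only [idx, Prod.mk.injEq, EmbeddingLike.apply_eq_iff_eq, Multiset.coe_eq_coe] at h
    exact Subtype.ext (L.2.eq_of_perm L'.2 h.1 h.2)
  let B := (basisMonomials (Fin m) k).tensorProduct (basisMonomials (Fin n) k)
  choose c₁ hc₁ h₁ using fun L : {L : List (Fin m × Fin n) // OrderedIdx L} =>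
    exists_affEval_prod_eq_smul_monomial hq (L.1.map Prod.fst)
  choose c₂ hc₂ h₂ using fun L : {L : List (Fin m × Fin n) // OrderedIdx L} =>
    exists_affEval_prod_eq_smul_monomial hq (L.1.map Prod.snd)
  have himage : TensorProduct.map (affEval k q m) (affEval k q n) ∘
      (fun L : {L : List (Fin m × Fin n) // OrderedIdx L} => θ (matMono k q m n L)) =
      (fun L => Units.mk0 (c₁ L * c₂ L) (mul_ne_zero (hc₁ L) (hc₂ L))) • (B ∘ idx) := by
    funext L
    simp only [Function.comp_apply, Pi.smul_apply', theta_matMono θ hθ, TensorProduct.map_tmul,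
      h₁, h₂, B, Module.Basis.tensorProduct_apply', coe_basisMonomials, Units.smul_mk0, idx]
    rw [TensorProduct.smul_tmul_smul]
  exact LinearIndependent.of_comp _ (himage ▸ (B.linearIndependent.comp idx hidx).units_smul _)

end QuantumMatrix

/-- The kernel of `θ` is exactly the ideal `I₁` generated by the `2 × 2`
quantum minors. -/
theorem ker_theta_eq_I1 (k : Type) [Field k] (q : k) (hq : q ≠ 0) (m n : ℕ)
    (θ : QMat k q m n →ₐ[k] QAff k q m ⊗[k] QAff k q n)
    (hθ : ∀ (i : Fin m) (j : Fin n),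
      θ (X k q m n i j) = affGen k q m i ⊗ₜ[k] affGen k q n j) :
    ∀ a : QMat k q m n, θ a = 0 ↔ a ∈ I₁ k q m n := by
  have hker : LinearMap.ker θ.toLinearMap = (I₁ k q m n).asIdeal.restrictScalars k :=
    LinearMap.ker_eq_of_linearIndependent_comp _
      (fun a ha => LinearMap.mem_ker.2 ((TwoSidedIdeal.mem_ker θ).1 (I₁_le_ker θ hθ ha)))
      (span_ordered_matMono_sup_I₁_eq_top hq) (linearIndependent_theta_matMono hq θ hθ)
  exact fun a => SetLike.ext_iff.1 hker a
end
end

section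
/- Let k be a field and q ∈ k^×. In A = O_q(M_{m,n}(k)), every monomial in the generators X_{ij} is congruent modulo the ideal I_1 to a k-linear combination of monomials X_{i_1 j_1} X_{i_2 j_2} ⋯ X_{i_l j_l} with i_1 ≥ i_2 ≥ ⋯ ≥ i_l and j_1 ≤ j_2 ≤ ⋯ ≤ j_l (allowing the empty monomial 1). Consequently, the cosets of these ordered monomials span A/I_1 as a k-vector space. -/
open scoped TensorProduct

noncomputable section

/-!
An unordered monomial contains an adjacent pair `X_a X_b` that is out of order, and one of the
defining relations, or the vanishing of the quantum minor modulo `I₁`, rewrites `X_a X_b` as a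
combination of products `X_{a'} X_{b'}` with the same row indices and the same column indices.
Each such rewrite lowers the number of column inversions, or keeps it and lowers the number of
row inversions; the lexicographic order is needed because of the relation
`X_{ij} X_{ls} = X_{ls} X_{ij} - (q - q⁻¹) X_{is} X_{lj}` for `l < i`, `s < j`, whose first term
has more row inversions. Since `A / I₁` is generated as an algebra by the `X_{ij}`, the monomials,
hence the ordered ones, span it.
-/

namespace List
variable {α : Type*} (r : α → α → Prop) [DecidableRel r]

def invCount : List α → ℕ
  | [] => 0
  | a :: l => l.countP (fun b => r a b) + invCount l

theorem invCount_append (l₁ l₂ : List α) :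
    invCount r (l₁ ++ l₂) =
      invCount r l₁ + (l₁.map fun a => l₂.countP (fun b => r a b)).sum + invCount r l₂ := by
  induction l₁ with
  | nil => simp [invCount]
  | cons a l ih => simp only [cons_append, invCount, ih, countP_append, map_cons, sum_cons]; ring

theorem invCount_pair (a b : α) : invCount r [a, b] = if r a b then 1 else 0 := by
  by_cases h : r a b <;> simp [invCount, h]

theorem invCount_append_append_add_of_perm {M M' : List α} (h : M ~ M') (A B : List α) :
    invCount r (A ++ M ++ B) + invCount r M' = invCount r (A ++ M' ++ B) + invCount r M := by
  have hA : (A.map fun a => M.countP (fun b => r a b)).sum =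
      (A.map fun a => M'.countP (fun b => r a b)).sum := by
    simp only [h.countP_eq]
  have hB : (M.map fun a => B.countP (fun b => r a b)).sum =
      (M'.map fun a => B.countP (fun b => r a b)).sum := (h.map _).sum_eq
  simp only [invCount_append, map_append, sum_append]
  omega

end List

open Submodule

section Straightening

variable {α β : Type*} [LinearOrder α] [LinearOrder β]

/-- Both components vanish exactly on the lists satisfying `OrderedIdx`. -/
def straighteningMeasure (L : List (α × β)) : ℕ ×ₗ ℕ :=
  toLex ((L.map Prod.snd).invCount (fun c c' => c' < c), (L.map Prod.fst).invCount (· < ·))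

def StraightensTo (a b a' b' : α × β) : Prop :=
  [a'.1, b'.1].Perm [a.1, b.1] ∧ [a'.2, b'.2].Perm [a.2, b.2] ∧
    straighteningMeasure [a', b'] < straighteningMeasure [a, b]

theorem straighteningMeasure_pair (a b : α × β) :
    straighteningMeasure [a, b] =
      toLex (if b.2 < a.2 then 1 else 0, if a.1 < b.1 then 1 else 0) := by
  simp [straighteningMeasure, List.invCount_pair]

theorem straighteningMeasure_lt_of_straightensTo {a b a' b' : α × β}
    (h : StraightensTo a b a' b') (A B : List (α × β)) :
    straighteningMeasure (A ++ a' :: b' :: B) < straighteningMeasure (A ++ a :: b :: B) := by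
  obtain ⟨hrow, hcol, hlt⟩ := h
  have hc := List.invCount_append_append_add_of_perm (fun c c' => c' < c) hcol
    (A.map Prod.snd) (B.map Prod.snd)
  have hr := List.invCount_append_append_add_of_perm (· < ·) hrow (A.map Prod.fst) (B.map Prod.fst)
  simp only [straighteningMeasure, Prod.Lex.toLex_lt_toLex, List.map_cons, List.map_nil] at hlt ⊢
  simp only [List.map_append, List.map_cons, List.append_assoc, List.cons_append,
    List.nil_append] at hc hr ⊢
  omega

end Straightening

section QuantumMatrices

variable (k : Type) [Field k] (q : k) (m n : ℕ)

def toQuotI₁ : FreeAlgebra k (Fin m × Fin n) →ₐ[k] (I₁ k q m n).ringCon.Quotient :=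
  ((I₁ k q m n).ringCon.mkₐ k).comp (RingQuot.mkAlgHom k (MatRel k q m n))

def orderedSpan : Submodule k (I₁ k q m n).ringCon.Quotient :=
  span k {x | ∃ L' : List (Fin m × Fin n), OrderedIdx L' ∧
    x = ((matMono k q m n L' : QMat k q m n) : (I₁ k q m n).ringCon.Quotient)}

local notation "π" => toQuotI₁ k q m n
local notation "𝐗" p:max => toQuotI₁ k q m n (FreeAlgebra.ι k p)

variable {k q m n}

theorem toQuotI₁_surjective : Function.Surjective π :=
  ((I₁ k q m n).ringCon.mkₐ_surjective (α := k)).comp (RingQuot.mkAlgHom_surjective k _)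

theorem coe_matMono (L : List (Fin m × Fin n)) :
    ((matMono k q m n L : QMat k q m n) : (I₁ k q m n).ringCon.Quotient) =
      (L.map fun p => 𝐗 p).prod := by
  simp [matMono, X, toQuotI₁]

theorem toQuotI₁_eq_of_matRel {a b : FreeAlgebra k (Fin m × Fin n)} (h : MatRel k q m n a b) :
    π a = π b := by
  simp only [toQuotI₁, AlgHom.comp_apply, RingQuot.mkAlgHom_rel k h]

theorem toQuotI₁_col {i l : Fin m} (j : Fin n) (hil : i < l) :
    𝐗 (i, j) * 𝐗 (l, j) = q • (𝐗 (l, j) * 𝐗 (i, j)) := by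
  simpa using toQuotI₁_eq_of_matRel (MatRel.col (k := k) (q := q) (j := j) hil)

theorem toQuotI₁_row (i : Fin m) {j s : Fin n} (hjs : j < s) :
    𝐗 (i, j) * 𝐗 (i, s) = q • (𝐗 (i, s) * 𝐗 (i, j)) := by
  simpa using toQuotI₁_eq_of_matRel (MatRel.row (k := k) (q := q) (i := i) hjs)

theorem toQuotI₁_comm {i l : Fin m} {j s : Fin n} (hil : i < l) (hjs : j < s) :
    𝐗 (i, s) * 𝐗 (l, j) = 𝐗 (l, j) * 𝐗 (i, s) := by
  simpa using toQuotI₁_eq_of_matRel (MatRel.comm (k := k) (q := q) hil hjs)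

theorem toQuotI₁_mixed {i l : Fin m} {j s : Fin n} (hil : i < l) (hjs : j < s) :
    𝐗 (i, j) * 𝐗 (l, s) - 𝐗 (l, s) * 𝐗 (i, j) = (q - q⁻¹) • (𝐗 (i, s) * 𝐗 (l, j)) := by
  simpa using toQuotI₁_eq_of_matRel (MatRel.mixed (k := k) (q := q) hil hjs)

theorem toQuotI₁_minor {i l : Fin m} {j s : Fin n} (hil : i < l) (hjs : j < s) :
    𝐗 (i, j) * 𝐗 (l, s) = q • (𝐗 (i, s) * 𝐗 (l, j)) := by
  have hmem : X k q m n i j * X k q m n l s - q • (X k q m n i s * X k q m n l j) ∈ I₁ k q m n :=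
    TwoSidedIdeal.subset_span ⟨i, l, j, s, hil, hjs, rfl⟩
  have h0 : (I₁ k q m n).ringCon.mkₐ k
      (X k q m n i j * X k q m n l s - q • (X k q m n i s * X k q m n l j)) = 0 :=
    (RingCon.eq _).2 ((TwoSidedIdeal.rel_iff _ _ _).2 (by simpa using hmem))
  rw [map_sub, map_smul, sub_eq_zero] at h0
  simpa [toQuotI₁, X] using h0

theorem mul_mem_span_straightensTo (hq : q ≠ 0) {a b : Fin m × Fin n}
    (hab : ¬ (b.1 ≤ a.1 ∧ a.2 ≤ b.2)) :
    𝐗 a * 𝐗 b ∈ span k {z | ∃ a' b', StraightensTo a b a' b' ∧ z = 𝐗 a' * 𝐗 b'} := by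
  obtain ⟨i, j⟩ := a
  obtain ⟨l, s⟩ := b
  have mem : ∀ a' b', StraightensTo (i, j) (l, s) a' b' →
      𝐗 a' * 𝐗 b' ∈ span k {z | ∃ a' b', StraightensTo (i, j) (l, s) a' b' ∧ z = 𝐗 a' * 𝐗 b'} :=
    fun a' b' h => subset_span ⟨a', b', h, rfl⟩
  simp only [not_and_or, not_le] at hab
  rcases lt_trichotomy i l with hil | rfl | hli
  · rcases lt_trichotomy j s with hjs | rfl | hsj
    · rw [toQuotI₁_minor hil hjs, toQuotI₁_comm hil hjs]
      refine smul_mem _ _ (mem (l, j) (i, s) ⟨.swap i l [], .refl _, ?_⟩)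
      simp [straighteningMeasure_pair, Prod.Lex.toLex_lt_toLex, hil, hil.not_gt, hjs.not_gt]
    · rw [toQuotI₁_col j hil]
      refine smul_mem _ _ (mem (l, j) (i, j) ⟨.swap i l [], .refl _, ?_⟩)
      simp [straighteningMeasure_pair, Prod.Lex.toLex_lt_toLex, hil, hil.not_gt]
    · rw [toQuotI₁_comm hil hsj]
      refine mem (l, s) (i, j) ⟨.swap i l [], .swap j s [], ?_⟩
      simp [straighteningMeasure_pair, Prod.Lex.toLex_lt_toLex, hil, hsj, hil.not_gt, hsj.not_gt]
  · have hsj := hab.resolve_left (lt_irrefl i)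
    rw [← inv_smul_smul₀ hq (𝐗 (i, j) * 𝐗 (i, s)), ← toQuotI₁_row i hsj]
    refine smul_mem _ _ (mem (i, s) (i, j) ⟨.refl _, .swap j s [], ?_⟩)
    simp [straighteningMeasure_pair, Prod.Lex.toLex_lt_toLex, hsj, hsj.not_gt]
  · have hsj := hab.resolve_left hli.not_gt
    rw [← sub_sub_cancel (𝐗 (l, s) * 𝐗 (i, j)) (𝐗 (i, j) * 𝐗 (l, s)), toQuotI₁_mixed hli hsj,
      toQuotI₁_comm hli hsj]
    refine sub_mem (mem (l, s) (i, j) ⟨.swap i l [], .swap j s [], ?_⟩)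
      (smul_mem _ _ (mem (i, s) (l, j) ⟨.refl _, .swap j s [], ?_⟩))
    · simp [straighteningMeasure_pair, Prod.Lex.toLex_lt_toLex, hli, hsj, hli.not_gt, hsj.not_gt]
    · simp [straighteningMeasure_pair, Prod.Lex.toLex_lt_toLex, hsj, hsj.not_gt]

theorem coe_matMono_mem_orderedSpan (hq : q ≠ 0) (L : List (Fin m × Fin n)) :
    ((matMono k q m n L : QMat k q m n) : (I₁ k q m n).ringCon.Quotient) ∈
      orderedSpan k q m n := by
  by_cases hL : OrderedIdx L
  · exact subset_span ⟨L, hL, rfl⟩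
  rw [OrderedIdx, List.Chain', List.isChain_iff_forall_rel_of_append_cons_cons] at hL
  simp only [not_forall, exists_prop] at hL
  obtain ⟨a, b, A, B, hsplit, hab⟩ := hL
  rw [hsplit]
  let f := LinearMap.mulLeft k ((matMono k q m n A : QMat k q m n) :
    (I₁ k q m n).ringCon.Quotient) ∘ₗ LinearMap.mulRight k (matMono k q m n B : QMat k q m n)
  have hf : span k {z | ∃ a' b', StraightensTo a b a' b' ∧ z = 𝐗 a' * 𝐗 b'} ≤
      (orderedSpan k q m n).comap f := by
    rw [span_le]
    rintro _ ⟨a', b', h, rfl⟩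
    simpa [f, coe_matMono, mul_assoc] using coe_matMono_mem_orderedSpan hq (A ++ a' :: b' :: B)
  simpa [f, coe_matMono, mul_assoc] using hf (mul_mem_span_straightensTo hq hab)
termination_by straighteningMeasure L
decreasing_by exact hsplit ▸ straighteningMeasure_lt_of_straightensTo h A B

theorem adjoin_range_toQuotI₁_ι :
    Algebra.adjoin k (Set.range fun p => 𝐗 p) = ⊤ := by
  rw [Set.range_comp', Algebra.adjoin_image, FreeAlgebra.adjoin_range_ι, Algebra.map_top,
    AlgHom.range_eq_top]
  exact toQuotI₁_surjective

theorem span_range_coe_matMono :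
    span k (Set.range fun L => ((matMono k q m n L : QMat k q m n) :
      (I₁ k q m n).ringCon.Quotient)) = ⊤ := by
  rw [eq_top_iff, ← Algebra.top_toSubmodule, ← adjoin_range_toQuotI₁_ι, Algebra.adjoin_eq_span,
    ← FreeMonoid.mrange_lift]
  refine span_mono ?_
  rintro _ ⟨w, rfl⟩
  exact ⟨w.toList, by simp [coe_matMono, FreeMonoid.lift_apply]⟩

theorem orderedSpan_eq_top (hq : q ≠ 0) : orderedSpan k q m n = ⊤ := by
  rw [eq_top_iff, ← span_range_coe_matMono, span_le]
  rintro _ ⟨L, rfl⟩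
  exact coe_matMono_mem_orderedSpan hq L

end QuantumMatrices

/-- Every monomial in the generators `X i j` is congruent modulo `I₁` to a
`k`-linear combination of ordered monomials; consequently the cosets of the ordered
monomials span `O_q(M_{m,n}(k))/I₁` as a `k`-vector space. -/
theorem orderedMono_span (k : Type) [Field k] (q : k) (hq : q ≠ 0) (m n : ℕ) :
    (∀ L : List (Fin m × Fin n),
        ((matMono k q m n L : QMat k q m n) : (I₁ k q m n).ringCon.Quotient) ∈
          Submodule.span k
            { x : (I₁ k q m n).ringCon.Quotient |
              ∃ L' : List (Fin m × Fin n), OrderedIdx L' ∧ x = ((matMono k q m n L' : QMat k q m n) : (I₁ k q m n).ringCon.Quotient) }) ∧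
      Submodule.span k
          { x : (I₁ k q m n).ringCon.Quotient |
            ∃ L' : List (Fin m × Fin n), OrderedIdx L' ∧ x = ((matMono k q m n L' : QMat k q m n) : (I₁ k q m n).ringCon.Quotient) } = ⊤ :=
  ⟨coe_matMono_mem_orderedSpan hq, orderedSpan_eq_top hq⟩
end
end

section
/- Let k be a field and q ∈ k^×. The cosets modulo I_1 of the monomials X_{i_1 j_1} X_{i_2 j_2} ⋯ X_{i_l j_l} with i_1 ≥ i_2 ≥ ⋯ ≥ i_l and j_1 ≤ j_2 ≤ ⋯ ≤ j_l (including the empty monomial 1) form a k-vector-space basis of O_q(M_{m,n}(k))/I_1. -/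
open scoped TensorProduct

noncomputable section

/-!
Modulo `I₁` the product of two generators is a scalar multiple of the product taken in ordered
form: for `p = (i, j)` and `p' = (l, s)`, `x_p x_{p'}` is a multiple of `x_{(max i l, min j s)} x_{(min i l, max j s)}`. Bubbling a generator into an
ordered monomial with this rule keeps it ordered, so every monomial is a multiple of an ordered
one, and monomials span.

For independence, let `X_{ij}` act on the span of the monomials in commuting row variables
`r_1, …, r_m` and column variables `c_1, …, c_n` by multiplication with `r_i c_j`, scaled by `q`
to the number of factors `r_l` with `l > i` and `c_s` with `s > j` already present.
These operators satisfy the defining relations and kill the `2 × 2` quantum minors, and they send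
`1` under an ordered monomial to a nonzero multiple of the monomial recording its multisets of
rows and columns. An ordered monomial is determined by these two multisets.
-/

namespace List

section SupInfInsert

variable {α β : Type*} [Lattice α] [Lattice β]

def supInfInsert (a : α × β) : List (α × β) → List (α × β)
  | [] => [a]
  | b :: l => (a.1 ⊔ b.1, a.2 ⊓ b.2) :: supInfInsert (a.1 ⊓ b.1, a.2 ⊔ b.2) l

lemma isChain_supInfInsert {a : α × β} {l : List (α × β)}
    (hl : l.IsChain fun p p' => p'.1 ≤ p.1 ∧ p.2 ≤ p'.2) :
    (supInfInsert a l).IsChain fun p p' => p'.1 ≤ p.1 ∧ p.2 ≤ p'.2 := by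
  induction l generalizing a with
  | nil => exact isChain_singleton a
  | cons b l ih =>
    have htail := ih (a := (a.1 ⊓ b.1, a.2 ⊔ b.2)) hl.tail
    cases l with
    | nil => exact isChain_pair.2 ⟨inf_le_sup, inf_le_sup⟩
    | cons c l =>
      obtain ⟨hbc, -⟩ := isChain_cons_cons.1 hl
      refine isChain_cons_cons.2 ⟨⟨?_, ?_⟩, htail⟩
      · exact sup_le (inf_le_left.trans le_sup_left) (hbc.1.trans le_sup_right)
      · exact le_inf (inf_le_left.trans le_sup_left) (inf_le_right.trans hbc.2)

end SupInfInsert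

lemma eq_of_isChain_of_perm_of_perm {α β : Type*} [PartialOrder α] [PartialOrder β]
    {L L' : List (α × β)}
    (hL : L.IsChain fun p p' => p'.1 ≤ p.1 ∧ p.2 ≤ p'.2)
    (hL' : L'.IsChain fun p p' => p'.1 ≤ p.1 ∧ p.2 ≤ p'.2)
    (hfst : (L.map Prod.fst).Perm (L'.map Prod.fst))
    (hsnd : (L.map Prod.snd).Perm (L'.map Prod.snd)) : L = L' := by
  have hfst' : L.map Prod.fst = L'.map Prod.fst :=
    hfst.eq_of_pairwise (fun _ _ _ _ h h' => le_antisymm h' h)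
      (isChain_map _ |>.2 (hL.imp fun _ _ h => h.1) |>.pairwise (R := (· ≥ ·)))
      (isChain_map _ |>.2 (hL'.imp fun _ _ h => h.1) |>.pairwise (R := (· ≥ ·)))
  have hsnd' : L.map Prod.snd = L'.map Prod.snd :=
    hsnd.eq_of_pairwise (fun _ _ _ _ h h' => le_antisymm h h')
      (isChain_map _ |>.2 (hL.imp fun _ _ h => h.2) |>.pairwise (R := (· ≤ ·)))
      (isChain_map _ |>.2 (hL'.imp fun _ _ h => h.2) |>.pairwise (R := (· ≤ ·)))
  rw [← zip_unzip L, ← zip_unzip L', unzip_fst, unzip_snd, unzip_fst, unzip_snd, hfst', hsnd']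

end List

namespace QMat

abbrev ModI₁ (k : Type) [Field k] (q : k) (m n : ℕ) : Type := (I₁ k q m n).ringCon.Quotient

variable {k : Type} [Field k] {q : k} {m n : ℕ}

section Spanning

variable (k q) in
def mkMod : FreeAlgebra k (Fin m × Fin n) →ₐ[k] ModI₁ k q m n :=
  (RingCon.mkₐ k _).comp (RingQuot.mkAlgHom k (MatRel k q m n))

variable (k q) in
def xMod (p : Fin m × Fin n) : ModI₁ k q m n := mkMod k q (FreeAlgebra.ι k p)

@[simp]
lemma mkMod_ι (p : Fin m × Fin n) : mkMod k q (FreeAlgebra.ι k p) = xMod k q p := rfl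

@[simp]
lemma coe_X (i : Fin m) (j : Fin n) :
    ((X k q m n i j : QMat k q m n) : ModI₁ k q m n) = xMod k q (i, j) := rfl

lemma mkMod_rel {a b : FreeAlgebra k (Fin m × Fin n)} (h : MatRel k q m n a b) :
    mkMod k q a = mkMod k q b :=
  congrArg (RingCon.mkₐ k _) (RingQuot.mkAlgHom_rel k h)

lemma xMod_col {i l : Fin m} {j : Fin n} (hil : i < l) :
    xMod k q (i, j) * xMod k q (l, j) = q • (xMod k q (l, j) * xMod k q (i, j)) := by
  simpa using mkMod_rel (MatRel.col (k := k) (q := q) (j := j) hil)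

lemma xMod_row {i : Fin m} {j s : Fin n} (hjs : j < s) :
    xMod k q (i, j) * xMod k q (i, s) = q • (xMod k q (i, s) * xMod k q (i, j)) := by
  simpa using mkMod_rel (MatRel.row (k := k) (q := q) (i := i) hjs)

lemma xMod_comm {i l : Fin m} {j s : Fin n} (hil : i < l) (hjs : j < s) :
    xMod k q (i, s) * xMod k q (l, j) = xMod k q (l, j) * xMod k q (i, s) := by
  simpa using mkMod_rel (MatRel.comm (k := k) (q := q) hil hjs)

lemma xMod_mixed {i l : Fin m} {j s : Fin n} (hil : i < l) (hjs : j < s) :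
    xMod k q (i, j) * xMod k q (l, s) - xMod k q (l, s) * xMod k q (i, j) =
      (q - q⁻¹) • (xMod k q (i, s) * xMod k q (l, j)) := by
  simpa using mkMod_rel (MatRel.mixed (k := k) (q := q) hil hjs)

lemma xMod_minor {i l : Fin m} {j s : Fin n} (hil : i < l) (hjs : j < s) :
    xMod k q (i, j) * xMod k q (l, s) = q • (xMod k q (i, s) * xMod k q (l, j)) := by
  have hmem : X k q m n i j * X k q m n l s - q • (X k q m n i s * X k q m n l j) ∈ I₁ k q m n :=
    TwoSidedIdeal.subset_span ⟨i, l, j, s, hil, hjs, rfl⟩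
  rw [← TwoSidedIdeal.ker_ringCon_mk' (I₁ k q m n), TwoSidedIdeal.mem_ker, map_sub,
    sub_eq_zero] at hmem
  simpa using hmem

lemma exists_xMod_mul_xMod_eq_smul_sup_inf (hq : q ≠ 0) (p p' : Fin m × Fin n) : ∃ c : k,
    xMod k q p * xMod k q p' =
      c • (xMod k q (p.1 ⊔ p'.1, p.2 ⊓ p'.2) * xMod k q (p.1 ⊓ p'.1, p.2 ⊔ p'.2)) := by
  obtain ⟨i, j⟩ := p
  obtain ⟨l, s⟩ := p'
  dsimp only
  by_cases hord : l ≤ i ∧ j ≤ s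
  · exact ⟨1, by simp [hord.1, hord.2]⟩
  rcases lt_trichotomy i l with hil | rfl | hli
  · rcases lt_trichotomy j s with hjs | rfl | hsj
    · exact ⟨q, by simp [hil.le, hjs.le, xMod_minor hil hjs, xMod_comm hil hjs]⟩
    · exact ⟨q, by simpa [hil.le] using xMod_col hil⟩
    · exact ⟨1, by simpa [hil.le, hsj.le] using xMod_comm hil hsj⟩
  · have hsj : s < j := by simpa using hord
    exact ⟨q⁻¹, by simp [hsj.le, xMod_row hsj, smul_smul, hq]⟩
  · have hsj : s < j := not_le.1 fun h => hord ⟨hli.le, h⟩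
    refine ⟨q⁻¹, ?_⟩
    have hmixed := xMod_mixed (k := k) (q := q) hli hsj
    rw [xMod_minor hli hsj, xMod_comm hli hsj] at hmixed
    simp only [hli.le, hsj.le, sup_of_le_left, inf_of_le_right]
    rw [← sub_sub_cancel (q • (xMod k q (i, s) * xMod k q (l, j)))
      (xMod k q (i, j) * xMod k q (l, s)), hmixed, ← sub_smul]
    congr 1
    ring

lemma coe_matMono (L : List (Fin m × Fin n)) :
    ((matMono k q m n L : QMat k q m n) : ModI₁ k q m n) = (L.map (xMod k q)).prod := by
  induction L with
  | nil => rfl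
  | cons p L ih =>
    rw [List.map_cons, List.prod_cons, ← ih, ← coe_X, ← RingCon.coe_mul]
    rfl

lemma exists_xMod_mul_prod_eq_smul_supInfInsert (hq : q ≠ 0) (p : Fin m × Fin n)
    (L : List (Fin m × Fin n)) : ∃ c : k,
      xMod k q p * (L.map (xMod k q)).prod = c • ((L.supInfInsert p).map (xMod k q)).prod := by
  induction L generalizing p with
  | nil => exact ⟨1, by simp [List.supInfInsert]⟩
  | cons b L ih =>
    obtain ⟨c, hc⟩ := exists_xMod_mul_xMod_eq_smul_sup_inf hq p b
    obtain ⟨c', hc'⟩ := ih (p.1 ⊓ b.1, p.2 ⊔ b.2)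
    refine ⟨c * c', ?_⟩
    rw [List.map_cons, List.prod_cons, ← mul_assoc, hc, smul_mul_assoc, mul_assoc, hc',
      mul_smul_comm, smul_smul]
    rfl

lemma exists_prod_xMod_eq_smul_ordered (hq : q ≠ 0) (L : List (Fin m × Fin n)) :
    ∃ (c : k) (L' : List (Fin m × Fin n)), OrderedIdx L' ∧
      (L.map (xMod k q)).prod = c • (L'.map (xMod k q)).prod := by
  induction L with
  | nil => exact ⟨1, [], List.isChain_nil, by simp⟩
  | cons p L ih =>
    obtain ⟨c, L', hL', h⟩ := ih
    obtain ⟨c', h'⟩ := exists_xMod_mul_prod_eq_smul_supInfInsert hq p L'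
    refine ⟨c * c', L'.supInfInsert p, List.isChain_supInfInsert hL', ?_⟩
    rw [List.map_cons, List.prod_cons, h, mul_smul_comm, h', smul_smul]

variable (k q m n)

lemma adjoin_range_xMod : Algebra.adjoin k (Set.range (xMod k q : Fin m × Fin n → _)) = ⊤ := by
  rw [show xMod k q = (mkMod k q : FreeAlgebra k (Fin m × Fin n) → _) ∘ FreeAlgebra.ι k from rfl,
    Set.range_comp, Algebra.adjoin_image, FreeAlgebra.adjoin_range_ι, Algebra.map_top,
    AlgHom.range_eq_top]
  exact (RingCon.mkₐ_surjective (α := k) _).comp (RingQuot.mkAlgHom_surjective k _)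

lemma span_range_prod_xMod :
    Submodule.span k (Set.range fun L : List (Fin m × Fin n) => (L.map (xMod k q)).prod) = ⊤ := by
  rw [eq_top_iff, ← Algebra.toSubmodule_eq_top.2 (adjoin_range_xMod k q m n),
    Algebra.adjoin_eq_span]
  refine Submodule.span_mono fun y hy => ?_
  induction hy using Submonoid.closure_induction with
  | mem _ hy =>
    obtain ⟨p, rfl⟩ := hy
    exact ⟨[p], by simp⟩
  | one => exact ⟨[], rfl⟩
  | mul _ _ _ _ hy hz =>
    obtain ⟨L, rfl⟩ := hy
    obtain ⟨L', rfl⟩ := hz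
    exact ⟨L ++ L', by simp⟩

lemma span_ordered_eq_top (hq : q ≠ 0) :
    Submodule.span k (Set.range fun L : { L : List (Fin m × Fin n) // OrderedIdx L } =>
      ((matMono k q m n L.1 : QMat k q m n) : ModI₁ k q m n)) = ⊤ := by
  rw [eq_top_iff, ← span_range_prod_xMod, Submodule.span_le]
  rintro _ ⟨L, rfl⟩
  obtain ⟨c, L', hL', h⟩ := exists_prod_xMod_eq_smul_ordered hq L
  simp only [SetLike.mem_coe, h]
  exact Submodule.smul_mem _ c (Submodule.subset_span ⟨⟨L', hL'⟩, coe_matMono L'⟩)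

end Spanning

section Independence

/-- A monomial in commuting row variables `r_i` and column variables `c_j`, recorded by its
multisets of row and column indices. -/
abbrev Exps (m n : ℕ) : Type := Multiset (Fin m) × Multiset (Fin n)

def exps (L : List (Fin m × Fin n)) : Exps m n := (L.map Prod.fst, L.map Prod.snd)

def weight (p : Fin m × Fin n) (μ : Exps m n) : ℕ :=
  μ.1.countP (p.1 < ·) + μ.2.countP (p.2 < ·)

lemma exps_cons (p : Fin m × Fin n) (L : List (Fin m × Fin n)) :
    exps (p :: L) = exps [p] + exps L := by
  simp [exps, Multiset.singleton_add, ← Multiset.cons_coe]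

lemma exps_pair_swap (a b : Fin m × Fin n) : exps [a, b] = exps [b, a] := by
  simp [exps, Prod.ext_iff, List.Perm.swap]

lemma exps_pair_exchange (i l : Fin m) (j s : Fin n) :
    exps [(i, j), (l, s)] = exps [(i, s), (l, j)] := by
  simp [exps, Prod.ext_iff, List.Perm.swap]

lemma weight_add (p : Fin m × Fin n) (μ ν : Exps m n) :
    weight p (μ + ν) = weight p μ + weight p ν := by
  simp only [weight, Prod.fst_add, Prod.snd_add, Multiset.countP_add]
  ring

lemma weight_exchange (i l : Fin m) (j s : Fin n) (μ : Exps m n) :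
    weight (i, j) μ + weight (l, s) μ = weight (i, s) μ + weight (l, j) μ := by
  simp only [weight]
  ring

lemma weight_exps_singleton (p p' : Fin m × Fin n) :
    weight p (exps [p']) = (if p.1 < p'.1 then 1 else 0) + (if p.2 < p'.2 then 1 else 0) := by
  simp [weight, exps, ← Multiset.cons_zero, Multiset.countP_cons]

variable (q) in
def shiftOp (p : Fin m × Fin n) : Module.End k (Exps m n →₀ k) :=
  Finsupp.lsum ℕ fun μ => q ^ weight p μ • Finsupp.lsingle (exps [p] + μ)

lemma shiftOp_single (p : Fin m × Fin n) (μ : Exps m n) (c : k) :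
    shiftOp q p (Finsupp.single μ c) = q ^ weight p μ • Finsupp.single (exps [p] + μ) c := by
  simp [shiftOp]

lemma shiftOp_mul_shiftOp_single (p p' : Fin m × Fin n) (μ : Exps m n) (c : k) :
    (shiftOp q p * shiftOp q p') (Finsupp.single μ c) =
      q ^ (weight p (exps [p']) + (weight p μ + weight p' μ)) •
        Finsupp.single (exps [p, p'] + μ) c := by
  rw [Module.End.mul_apply, shiftOp_single, map_smul, shiftOp_single, smul_smul, ← pow_add,
    weight_add, exps_cons p [p'], add_assoc]
  ring_nf

variable (q) in
def freeRep : FreeAlgebra k (Fin m × Fin n) →ₐ[k] Module.End k (Exps m n →₀ k) :=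
  FreeAlgebra.lift k (shiftOp q)

lemma freeRep_rel (hq : q ≠ 0) {a b : FreeAlgebra k (Fin m × Fin n)} (h : MatRel k q m n a b) :
    freeRep q a = freeRep q b := by
  refine Finsupp.lhom_ext fun μ c => ?_
  induction h with
  | @col i l j hil =>
    simp only [map_mul, map_smul, freeRep, FreeAlgebra.lift_ι_apply, LinearMap.smul_apply,
      shiftOp_mul_shiftOp_single, weight_exps_singleton, smul_smul, exps_pair_swap (i, j),
      if_pos hil, if_neg hil.not_gt, lt_irrefl, if_false, add_comm (weight (i, j) μ)]
    ring_nf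
  | @row i j s hjs =>
    simp only [map_mul, map_smul, freeRep, FreeAlgebra.lift_ι_apply, LinearMap.smul_apply,
      shiftOp_mul_shiftOp_single, weight_exps_singleton, smul_smul, exps_pair_swap (i, j),
      if_pos hjs, if_neg hjs.not_gt, lt_irrefl, if_false, add_comm (weight (i, j) μ)]
    ring_nf
  | @comm i l j s hil hjs =>
    simp only [map_mul, freeRep, FreeAlgebra.lift_ι_apply,
      shiftOp_mul_shiftOp_single, weight_exps_singleton, exps_pair_swap (i, s),
      if_pos hil, if_neg hil.not_gt, if_pos hjs, if_neg hjs.not_gt, add_comm (weight (i, s) μ)]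
  | @mixed i l j s hil hjs =>
    simp only [map_mul, map_sub, map_smul, freeRep, FreeAlgebra.lift_ι_apply,
      LinearMap.sub_apply, LinearMap.smul_apply, shiftOp_mul_shiftOp_single,
      weight_exps_singleton, smul_smul, exps_pair_swap (l, s), exps_pair_exchange i l j s,
      if_pos hil, if_neg hil.not_gt, if_pos hjs, if_neg hjs.not_gt,
      add_comm (weight (l, s) μ), weight_exchange i l j s, ← sub_smul]
    congr 1
    field_simp
    ring

def matRep (hq : q ≠ 0) : QMat k q m n →ₐ[k] Module.End k (Exps m n →₀ k) :=
  RingQuot.liftAlgHom k ⟨freeRep q, fun _ _ => freeRep_rel hq⟩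

lemma matRep_X (hq : q ≠ 0) (i : Fin m) (j : Fin n) :
    matRep hq (X k q m n i j) = shiftOp q (i, j) := by
  rw [X, matRep, RingQuot.liftAlgHom_mkAlgHom_apply, freeRep, FreeAlgebra.lift_ι_apply]

lemma I₁_le_ker_matRep (hq : q ≠ 0) : I₁ k q m n ≤ TwoSidedIdeal.ker (matRep hq) := by
  refine TwoSidedIdeal.span_le.2 ?_
  rintro _ ⟨i, l, j, s, hil, hjs, rfl⟩
  rw [SetLike.mem_coe, TwoSidedIdeal.mem_ker]
  refine Finsupp.lhom_ext fun μ c => ?_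
  simp only [map_sub, map_mul, map_smul, matRep_X, LinearMap.sub_apply, LinearMap.smul_apply,
    LinearMap.zero_apply, shiftOp_mul_shiftOp_single, weight_exps_singleton, smul_smul,
    exps_pair_exchange i l j s, if_pos hil, if_pos hjs, if_neg hjs.not_gt,
    weight_exchange i l j s, ← sub_smul]
  ring_nf
  exact zero_smul k _

def quotRep (hq : q ≠ 0) : ModI₁ k q m n →ₐ[k] Module.End k (Exps m n →₀ k) :=
  RingCon.liftₐ _ (matRep hq) (TwoSidedIdeal.ringCon_le_iff.1 (I₁_le_ker_matRep hq))

lemma exists_matRep_matMono_single_zero (hq : q ≠ 0) (L : List (Fin m × Fin n)) : ∃ e : ℕ,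
    matRep hq (matMono k q m n L) (Finsupp.single 0 1) = q ^ e • Finsupp.single (exps L) 1 := by
  induction L with
  | nil => exact ⟨0, by simp [matMono, exps, Prod.mk_zero_zero]⟩
  | cons p L ih =>
    obtain ⟨e, he⟩ := ih
    refine ⟨e + weight p (exps L), ?_⟩
    rw [matMono, List.map_cons, List.prod_cons, map_mul, Module.End.mul_apply, ← matMono, he,
      matRep_X, map_smul, shiftOp_single, smul_smul, pow_add, exps_cons p L]

lemma exps_injective_ordered :
    Function.Injective fun L : { L : List (Fin m × Fin n) // OrderedIdx L } => exps L.1 :=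
  fun L L' h => Subtype.ext <| List.eq_of_isChain_of_perm_of_perm L.2 L'.2
    (Multiset.coe_eq_coe.1 (congrArg Prod.fst h)) (Multiset.coe_eq_coe.1 (congrArg Prod.snd h))

variable (k q m n)

lemma linearIndependent_ordered (hq : q ≠ 0) :
    LinearIndependent k (fun L : { L : List (Fin m × Fin n) // OrderedIdx L } =>
      ((matMono k q m n L.1 : QMat k q m n) : ModI₁ k q m n)) := by
  choose e he using fun L : { L : List (Fin m × Fin n) // OrderedIdx L } =>
    exists_matRep_matMono_single_zero hq L.1
  refine LinearIndependent.of_comp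
    ((LinearMap.applyₗ (Finsupp.single 0 1)).comp (quotRep hq).toLinearMap) ?_
  convert ((Finsupp.linearIndependent_single_one k (Exps m n)).comp _
    exps_injective_ordered).units_smul fun L => Units.mk0 (q ^ e L) (pow_ne_zero _ hq) using 1
  funext L
  exact he L

end Independence

end QMat

/-- The cosets modulo `I₁` of the ordered monomials form a `k`-vector-space
basis of `O_q(M_{m,n}(k))/I₁`: they are linearly independent and they span. -/
theorem orderedMono_basis (k : Type) [Field k] (q : k) (hq : q ≠ 0) (m n : ℕ) :
    LinearIndependent k
        (fun L : { L : List (Fin m × Fin n) // OrderedIdx L } =>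
          ((matMono k q m n L.1 : QMat k q m n) : (I₁ k q m n).ringCon.Quotient)) ∧
      Submodule.span k
          (Set.range fun L : { L : List (Fin m × Fin n) // OrderedIdx L } =>
            ((matMono k q m n L.1 : QMat k q m n) : (I₁ k q m n).ringCon.Quotient)) = ⊤ :=
  ⟨QMat.linearIndependent_ordered k q m n hq, QMat.span_ordered_eq_top k q m n hq⟩
end
end

section
/- Let k be a field, q ∈ k^×, and θ : O_q(M_{m,n}(k)) → O_q(k^m) ⊗_k O_q(k^n) the k-algebra homomorphism with θ(X_{ij}) = y_i ⊗ z_j. Then θ maps the set S of monomials X_{i_1 j_1} ⋯ X_{i_l j_l} with i_1 ≥ ⋯ ≥ i_l and j_1 ≤ ⋯ ≤ j_l injectively onto a k-linearly independent subset of O_q(k^m) ⊗_k O_q(k^n); explicitly, θ(X_{i_1 j_1} ⋯ X_{i_l j_l}) = y_{i_1} ⋯ y_{i_l} ⊗ z_{j_1} ⋯ z_{j_l}. -/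
open scoped TensorProduct

noncomputable section

/-! `O_q(k^n)` acts on `k[x_1, …, x_n]` by letting `y_i` send `f` to
`x_i · f(x_1, …, x_i, q x_{i+1}, …, q x_n)`; these operators satisfy `y_i y_j = q y_j y_i` for
`i < j`. Applied to `1`, a word `y_{i_1} ⋯ y_{i_l}` gives a nonzero multiple of the monomial
`x_{i_1} ⋯ x_{i_l}` when `q ≠ 0`. Tensoring two such maps, `θ` of an ordered monomial goes to a unit
multiple of a basis monomial of `k[x] ⊗ k[z]`, and distinct ordered index lists give distinct basis
monomials: an ordered list is determined by the multisets of its row and of its column indices. -/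

namespace MvPolynomial

variable {R σ : Type*} [CommSemiring R]

theorem list_prod_X_eq_monomial [DecidableEq σ] (r : List σ) :
    ((r.map X).prod : MvPolynomial σ R) = monomial (Multiset.toFinsupp (r : Multiset σ)) 1 := by
  induction r with
  | nil => simp
  | cons i r ih =>
    rw [List.map_cons, List.prod_cons, ih, ← Multiset.cons_coe, ← Multiset.singleton_add,
      Multiset.toFinsupp_add, Multiset.toFinsupp_singleton, monomial_single_add, pow_one]

variable [LinearOrder σ] (q : R)

def scaleAbove (i : σ) : MvPolynomial σ R →ₐ[R] MvPolynomial σ R :=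
  aeval fun j => if i < j then C q * X j else X j

theorem scaleAbove_X (i j : σ) :
    scaleAbove q i (X j) = if i < j then C q * X j else X j :=
  aeval_X _ _

theorem scaleAbove_comm (i j : σ) (f : MvPolynomial σ R) :
    scaleAbove q i (scaleAbove q j f) = scaleAbove q j (scaleAbove q i f) := by
  suffices (scaleAbove q i).comp (scaleAbove q j) = (scaleAbove q j).comp (scaleAbove q i) from
    DFunLike.congr_fun this f
  refine algHom_ext fun t => ?_
  by_cases hi : i < t <;> by_cases hj : j < t <;> simp [scaleAbove_X, hi, hj]

theorem exists_unit_scaleAbove_list_prod_X (hq : IsUnit q) (i : σ) (r : List σ) :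
    ∃ c : Rˣ, scaleAbove q i (r.map X).prod = c • (r.map X).prod := by
  induction r with
  | nil => exact ⟨1, by simp⟩
  | cons j r ih =>
    obtain ⟨c, hc⟩ := ih
    obtain ⟨a, ha⟩ : ∃ a : Rˣ, scaleAbove q i (X j) = a • X j := by
      by_cases hij : i < j
      · exact ⟨hq.unit, by simp [scaleAbove_X, hij, Units.smul_def, smul_eq_C_mul]⟩
      · exact ⟨1, by simp [scaleAbove_X, hij]⟩
    refine ⟨a * c, ?_⟩
    rw [List.map_cons, List.prod_cons, map_mul, ha, hc, smul_mul_smul_comm, mul_smul]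

def qShift (i : σ) : Module.End R (MvPolynomial σ R) :=
  LinearMap.mulLeft R (X i) ∘ₗ (scaleAbove q i).toLinearMap

theorem qShift_apply (i : σ) (f : MvPolynomial σ R) : qShift q i f = X i * scaleAbove q i f :=
  rfl

theorem qShift_mul_qShift {i j : σ} (h : i < j) :
    qShift q i * qShift q j = q • (qShift q j * qShift q i) := by
  refine LinearMap.ext fun f => ?_
  simp only [Module.End.mul_apply, LinearMap.smul_apply, qShift_apply, map_mul, scaleAbove_X,
    h, if_true, lt_asymm h, if_false, scaleAbove_comm q i j, smul_eq_C_mul]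
  ring

end MvPolynomial

theorem LinearIndependent.of_map_eq_units_smul_basis {ι κ R M N : Type*} [Semiring R]
    [AddCommMonoid M] [AddCommMonoid N] [Module R M] [Module R N] {v : ι → M}
    (f : M →ₗ[R] N) (b : Module.Basis κ R N) {g : ι → κ} (hg : Function.Injective g)
    (h : ∀ i, ∃ c : Rˣ, f (v i) = c • b (g i)) : LinearIndependent R v := by
  choose c hc using h
  refine LinearIndependent.of_comp f ?_
  convert (b.linearIndependent.comp g hg).units_smul c using 1
  exact funext hc

namespace QAff

open MvPolynomial

variable (k : Type) [Field k] (q : k) (n : ℕ)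

def toEnd : QAff k q n →ₐ[k] Module.End k (MvPolynomial (Fin n) k) :=
  RingQuot.liftAlgHom k ⟨FreeAlgebra.lift k (qShift q), by
    rintro _ _ ⟨h⟩
    simp only [map_mul, map_smul, FreeAlgebra.lift_ι_apply]
    exact qShift_mul_qShift q h⟩

theorem toEnd_affGen (i : Fin n) : toEnd k q n (affGen k q n i) = qShift q i := by
  rw [affGen, toEnd, RingQuot.liftAlgHom_mkAlgHom_apply, FreeAlgebra.lift_ι_apply]

def toMvPolynomial : QAff k q n →ₗ[k] MvPolynomial (Fin n) k :=
  LinearMap.applyₗ 1 ∘ₗ (toEnd k q n).toLinearMap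

theorem toMvPolynomial_apply (a : QAff k q n) : toMvPolynomial k q n a = toEnd k q n a 1 :=
  rfl

theorem exists_unit_toMvPolynomial_list_prod {q : k} (hq : q ≠ 0) (r : List (Fin n)) :
    ∃ c : kˣ, toMvPolynomial k q n (r.map (affGen k q n)).prod = c • (r.map X).prod := by
  induction r with
  | nil => exact ⟨1, by simp [toMvPolynomial_apply]⟩
  | cons i r ih =>
    obtain ⟨c, hc⟩ := ih
    obtain ⟨d, hd⟩ := exists_unit_scaleAbove_list_prod_X q (isUnit_iff_ne_zero.mpr hq) i r
    refine ⟨c * d, ?_⟩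
    have hshift : toMvPolynomial k q n ((i :: r).map (affGen k q n)).prod =
        qShift q i (toMvPolynomial k q n (r.map (affGen k q n)).prod) := by
      rw [List.map_cons, List.prod_cons, toMvPolynomial_apply, toMvPolynomial_apply, map_mul,
        toEnd_affGen, Module.End.mul_apply]
    rw [Units.smul_def] at hc hd
    rw [hshift, hc, map_smul, qShift_apply, hd, mul_smul_comm, Units.smul_def, Units.val_mul,
      mul_smul, List.map_cons, List.prod_cons]

theorem exists_unit_map_toMvPolynomial_tmul {m : ℕ} {q : k} (hq : q ≠ 0)
    (r : List (Fin m)) (s : List (Fin n)) :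
    ∃ c : kˣ, TensorProduct.map (toMvPolynomial k q m) (toMvPolynomial k q n)
        ((r.map (affGen k q m)).prod ⊗ₜ (s.map (affGen k q n)).prod) =
      c • ((basisMonomials (Fin m) k).tensorProduct (basisMonomials (Fin n) k))
        (Multiset.toFinsupp r, Multiset.toFinsupp s) := by
  obtain ⟨c, hc⟩ := exists_unit_toMvPolynomial_list_prod k m hq r
  obtain ⟨d, hd⟩ := exists_unit_toMvPolynomial_list_prod k n hq s
  refine ⟨c * d, ?_⟩
  rw [Units.smul_def] at hc hd
  rw [TensorProduct.map_tmul, hc, hd, TensorProduct.smul_tmul_smul,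
    Module.Basis.tensorProduct_apply, coe_basisMonomials, coe_basisMonomials,
    list_prod_X_eq_monomial, list_prod_X_eq_monomial, Units.smul_def, Units.val_mul]

end QAff

namespace OrderedIdx

variable {m n : ℕ} {L L' : List (Fin m × Fin n)}

theorem pairwise_fst (hL : OrderedIdx L) : (L.map Prod.fst).Pairwise (· ≥ ·) :=
  List.isChain_iff_pairwise.mp (List.isChain_map _ |>.mpr (hL.imp fun _ _ h => h.1))

theorem pairwise_snd (hL : OrderedIdx L) : (L.map Prod.snd).Pairwise (· ≤ ·) :=
  List.isChain_iff_pairwise.mp (List.isChain_map _ |>.mpr (hL.imp fun _ _ h => h.2))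

theorem eq_of_perm_s7 (hL : OrderedIdx L) (hL' : OrderedIdx L')
    (hfst : (L.map Prod.fst).Perm (L'.map Prod.fst))
    (hsnd : (L.map Prod.snd).Perm (L'.map Prod.snd)) : L = L' := by
  rw [List.zip_of_prod rfl rfl (xs := L), List.zip_of_prod rfl rfl (xs := L'),
    hfst.eq_of_pairwise' hL.pairwise_fst hL'.pairwise_fst,
    hsnd.eq_of_pairwise' hL.pairwise_snd hL'.pairwise_snd]

theorem injective_toFinsupp_fst_snd :
    Function.Injective fun L : { L : List (Fin m × Fin n) // OrderedIdx L } =>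
      (Multiset.toFinsupp (L.1.map Prod.fst : Multiset (Fin m)),
        Multiset.toFinsupp (L.1.map Prod.snd : Multiset (Fin n))) := by
  rintro ⟨L, hL⟩ ⟨L', hL'⟩ h
  simp only [Prod.mk.injEq, EmbeddingLike.apply_eq_iff_eq, Multiset.coe_eq_coe] at h
  exact Subtype.ext (hL.eq_of_perm_s7 hL' h.1 h.2)

end OrderedIdx

theorem map_matMono_eq_tmul {k : Type} {A B : Type*} [Field k] [Semiring A] [Semiring B]
    [Algebra k A] [Algebra k B]
    {q : k} {m n : ℕ} (θ : QMat k q m n →ₐ[k] A ⊗[k] B) {a : Fin m → A} {b : Fin n → B}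
    (hθ : ∀ i j, θ (X k q m n i j) = a i ⊗ₜ b j) (L : List (Fin m × Fin n)) :
    θ (matMono k q m n L) = (L.map fun p => a p.1).prod ⊗ₜ (L.map fun p => b p.2).prod := by
  induction L with
  | nil => simp [matMono, Algebra.TensorProduct.one_def]
  | cons p L ih =>
    simp only [matMono, List.map_cons, List.prod_cons, map_mul] at ih ⊢
    rw [ih, hθ, Algebra.TensorProduct.tmul_mul_tmul]

/-- `θ` sends the monomial `X_{i₁j₁} ⋯ X_{iₗjₗ}` to
`y_{i₁} ⋯ y_{iₗ} ⊗ z_{j₁} ⋯ z_{jₗ}`, and it maps the set of ordered monomials injectively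
onto a `k`-linearly independent subset of `O_q(k^m) ⊗ O_q(k^n)`. -/
theorem theta_orderedMono_linearIndependent (k : Type) [Field k] (q : k) (hq : q ≠ 0)
    (m n : ℕ)
    (θ : QMat k q m n →ₐ[k] QAff k q m ⊗[k] QAff k q n)
    (hθ : ∀ (i : Fin m) (j : Fin n),
      θ (X k q m n i j) = affGen k q m i ⊗ₜ[k] affGen k q n j) :
    (∀ L : List (Fin m × Fin n),
        θ (matMono k q m n L) =
          ((L.map fun p => affGen k q m p.1).prod) ⊗ₜ[k]
            ((L.map fun p => affGen k q n p.2).prod)) ∧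
      LinearIndependent k
        (fun L : { L : List (Fin m × Fin n) // OrderedIdx L } =>
          θ (matMono k q m n L.1)) ∧
      Set.InjOn θ { a : QMat k q m n |
        ∃ L : List (Fin m × Fin n), OrderedIdx L ∧ a = matMono k q m n L } := by
  have hmono := map_matMono_eq_tmul θ hθ
  have hli : LinearIndependent k
      (fun L : { L : List (Fin m × Fin n) // OrderedIdx L } => θ (matMono k q m n L.1)) :=
    .of_map_eq_units_smul_basis _ _ OrderedIdx.injective_toFinsupp_fst_snd fun L => by
      simpa only [hmono, List.map_map, Function.comp_def] using
        QAff.exists_unit_map_toMvPolynomial_tmul k n hq (L.1.map Prod.fst) (L.1.map Prod.snd)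
  refine ⟨hmono, hli, ?_⟩
  rintro _ ⟨L, hL, rfl⟩ _ ⟨L', hL', rfl⟩ h
  exact congrArg (matMono k q m n ·.1) (hli.injective h (a₁ := ⟨L, hL⟩) (a₂ := ⟨L', hL'⟩))
end
end

section
/- Let k be an infinite field and q ∈ k^×. Let P be an H-prime ideal of O_q(M_{m,n}(k)) containing I_1. Then for all indices i, j: X_{ij} ∈ P if and only if either X_{it} ∈ P for all t ∈ {1, …, n} (all of row i lies in P) or X_{sj} ∈ P for all s ∈ {1, …, m} (all of column j lies in P). -/
open scoped TensorProduct

noncomputable section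

/-- A two-sided ideal `P` of `O_q(M_{m,n}(k))` is `H`-invariant for the torus
`H = (k^×)^m × (k^×)^n` if it is stable under every `k`-algebra automorphism sending each
`X i j` to `α_i β_j X i j`. -/
def IsHInvariant (k : Type) [Field k] (q : k) (m n : ℕ)
    (P : TwoSidedIdeal (QMat k q m n)) : Prop :=
  ∀ (α : Fin m → kˣ) (β : Fin n → kˣ) (φ : QMat k q m n ≃ₐ[k] QMat k q m n),
    (∀ (i : Fin m) (j : Fin n),
      φ (X k q m n i j) = ((α i : k) * (β j : k)) • X k q m n i j) →
    ∀ a ∈ P, φ a ∈ P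

/-- A proper `H`-invariant two-sided ideal `P` is `H`-prime if for all `H`-invariant
two-sided ideals `Q`, `R` with `QR ⊆ P` one has `Q ⊆ P` or `R ⊆ P`. -/
def IsHPrime (k : Type) [Field k] (q : k) (m n : ℕ)
    (P : TwoSidedIdeal (QMat k q m n)) : Prop :=
  IsHInvariant k q m n P ∧ P ≠ ⊤ ∧
    ∀ Q R : TwoSidedIdeal (QMat k q m n),
      IsHInvariant k q m n Q → IsHInvariant k q m n R →
      (∀ a ∈ Q, ∀ b ∈ R, a * b ∈ P) → Q ≤ P ∨ R ≤ P


namespace QMatAux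

variable {k : Type} [Field k] {q : k} {m n : ℕ}

theorem Xcol {i l : Fin m} (j : Fin n) (h : i < l) :
    X k q m n i j * X k q m n l j = q • (X k q m n l j * X k q m n i j) := by
  simp only [X, ← map_mul, ← map_smul]
  exact RingQuot.mkAlgHom_rel k (MatRel.col h)

theorem Xrow (i : Fin m) {j s : Fin n} (h : j < s) :
    X k q m n i j * X k q m n i s = q • (X k q m n i s * X k q m n i j) := by
  simp only [X, ← map_mul, ← map_smul]
  exact RingQuot.mkAlgHom_rel k (MatRel.row h)

theorem Xcomm {i l : Fin m} {j s : Fin n} (h : i < l) (h' : j < s) :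
    X k q m n i s * X k q m n l j = X k q m n l j * X k q m n i s := by
  simp only [X, ← map_mul]
  exact RingQuot.mkAlgHom_rel k (MatRel.comm h h')

theorem Xmixed {i l : Fin m} {j s : Fin n} (h : i < l) (h' : j < s) :
    X k q m n i j * X k q m n l s - X k q m n l s * X k q m n i j
      = (q - q⁻¹) • (X k q m n i s * X k q m n l j) := by
  simp only [X, ← map_mul, ← map_smul, ← map_sub]
  exact RingQuot.mkAlgHom_rel k (MatRel.mixed h h')

theorem mulNeg (a x : QMat k q m n) : a * -x = -(a * x) := mul_neg a x

theorem negMul (a x : QMat k q m n) : -a * x = -(a * x) := neg_mul a x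

theorem Psmul {P : TwoSidedIdeal (QMat k q m n)} (c : k) {x : QMat k q m n}
    (hx : x ∈ P) : c • x ∈ P := by
  rw [Algebra.smul_def]
  exact P.mul_mem_left _ _ hx

theorem Ismul {L : Ideal (QMat k q m n)} (c : k) {x : QMat k q m n}
    (hx : x ∈ L) : c • x ∈ L := by
  rw [Algebra.smul_def]
  exact Ideal.mul_mem_left _ _ hx

theorem Psmul_cancel {P : TwoSidedIdeal (QMat k q m n)} (hq : q ≠ 0) {x : QMat k q m n}
    (hx : q • x ∈ P) : x ∈ P := by
  have : x = q⁻¹ • (q • x) := by rw [smul_smul, inv_mul_cancel₀ hq, one_smul]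
  rw [this]
  exact Psmul _ hx

/-- If `X i j ∈ P` and `I₁ ⊆ P`, then `X i t * X s j ∈ P` for all `s`, `t`. -/
theorem prod_mem {P : TwoSidedIdeal (QMat k q m n)} (hq : q ≠ 0)
    (hI : I₁ k q m n ≤ P) {i : Fin m} {j : Fin n} (hij : X k q m n i j ∈ P)
    (t : Fin n) (s : Fin m) : X k q m n i t * X k q m n s j ∈ P := by
  have minor : ∀ {a c : Fin m} {b d : Fin n}, a < c → b < d →
      X k q m n a b * X k q m n c d - q • (X k q m n a d * X k q m n c b) ∈ P := by
    intro a c b d h h'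
    exact hI (TwoSidedIdeal.subset_span ⟨a, c, b, d, h, h', rfl⟩)
  rcases lt_trichotomy i s with his | his | his
  · rcases lt_trichotomy j t with hjt | hjt | hjt
    · -- i < s, j < t : minor (i,s;j,t)
      have hM := minor his hjt
      have h1 : X k q m n i j * X k q m n s t ∈ P := P.mul_mem_right _ _ hij
      have h2 : q • (X k q m n i t * X k q m n s j) ∈ P := by
        have : q • (X k q m n i t * X k q m n s j)
            = X k q m n i j * X k q m n s t
              - (X k q m n i j * X k q m n s t - q • (X k q m n i t * X k q m n s j)) := by
          rw [sub_sub_cancel]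
        rw [this]; exact P.sub_mem h1 hM
      exact Psmul_cancel hq h2
    · subst hjt; exact P.mul_mem_right _ _ hij
    · -- i < s, t < j : minor (i,s;t,j)
      have hM := minor his hjt
      have h1 : q • (X k q m n i j * X k q m n s t) ∈ P :=
        Psmul _ (P.mul_mem_right _ _ hij)
      have : X k q m n i t * X k q m n s j
          = (X k q m n i t * X k q m n s j - q • (X k q m n i j * X k q m n s t))
            + q • (X k q m n i j * X k q m n s t) := by rw [sub_add_cancel]
      rw [this]; exact P.add_mem hM h1
  · subst his; exact P.mul_mem_left _ _ hij
  · rcases lt_trichotomy j t with hjt | hjt | hjt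
    · -- s < i, j < t : minor (s,i;j,t) then mixed
      have hM := minor his hjt
      have h1 : X k q m n s t * X k q m n i j ∈ P := P.mul_mem_left _ _ hij
      have h2 : X k q m n s j * X k q m n i t ∈ P := by
        have : X k q m n s j * X k q m n i t
            = (X k q m n s j * X k q m n i t - q • (X k q m n s t * X k q m n i j))
              + q • (X k q m n s t * X k q m n i j) := by rw [sub_add_cancel]
        rw [this]; exact P.add_mem hM (Psmul _ h1)
      have hE := Xmixed (k := k) (q := q) his hjt
      have : X k q m n i t * X k q m n s j
          = X k q m n s j * X k q m n i t - (q - q⁻¹) • (X k q m n s t * X k q m n i j) := by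
        rw [← hE, sub_sub_cancel]
      rw [this]
      exact P.sub_mem h2 (Psmul _ h1)
    · subst hjt; exact P.mul_mem_right _ _ hij
    · -- s < i, t < j : minor (s,i;t,j) then comm
      have hM := minor his hjt
      have h1 : X k q m n s t * X k q m n i j ∈ P := P.mul_mem_left _ _ hij
      have h2 : q • (X k q m n s j * X k q m n i t) ∈ P := by
        have : q • (X k q m n s j * X k q m n i t)
            = X k q m n s t * X k q m n i j
              - (X k q m n s t * X k q m n i j - q • (X k q m n s j * X k q m n i t)) := by
          rw [sub_sub_cancel]
        rw [this]; exact P.sub_mem h1 hM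
      have h3 := Psmul_cancel hq h2
      rwa [Xcomm his hjt] at h3

/-- The left ideal generated by row `i`. -/
def rowIdeal (k : Type) [Field k] (q : k) (m n : ℕ) (i : Fin m) : Ideal (QMat k q m n) :=
  Ideal.span (Set.range (X k q m n i))

theorem X_mem_rowIdeal (i : Fin m) (t : Fin n) : X k q m n i t ∈ rowIdeal k q m n i :=
  Ideal.subset_span ⟨t, rfl⟩

theorem gen_mul_mem (hq : q ≠ 0) (i : Fin m) (t : Fin n) (a : Fin m) (b : Fin n) :
    X k q m n i t * X k q m n a b ∈ rowIdeal k q m n i := by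
  set L := rowIdeal k q m n i with hL
  rcases lt_trichotomy i a with hia | hia | hia
  · rcases lt_trichotomy t b with htb | htb | htb
    · -- i < a, t < b : mixed, then comm
      have hE := Xmixed (k := k) (q := q) hia htb
      have : X k q m n i t * X k q m n a b
          = (q - q⁻¹) • (X k q m n i b * X k q m n a t) + X k q m n a b * X k q m n i t := by
        exact sub_eq_iff_eq_add.mp hE
      rw [this, Xcomm hia htb]
      exact L.add_mem (Ismul _ (Ideal.mul_mem_left _ _ (X_mem_rowIdeal i b)))
        (Ideal.mul_mem_left _ _ (X_mem_rowIdeal i t))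
    · subst htb
      rw [Xcol t hia]
      exact Ismul _ (Ideal.mul_mem_left _ _ (X_mem_rowIdeal i t))
    · -- i < a, b < t : comm
      rw [Xcomm hia htb]
      exact Ideal.mul_mem_left _ _ (X_mem_rowIdeal i t)
  · subst hia
    exact Ideal.mul_mem_left _ _ (X_mem_rowIdeal i b)
  · rcases lt_trichotomy t b with htb | htb | htb
    · -- a < i, t < b : comm
      rw [← Xcomm hia htb]
      exact Ideal.mul_mem_left _ _ (X_mem_rowIdeal i t)
    · subst htb
      have hE := Xcol (k := k) (q := q) t hia
      have : X k q m n i t * X k q m n a t = q⁻¹ • (X k q m n a t * X k q m n i t) := by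
        rw [hE, smul_smul, inv_mul_cancel₀ hq, one_smul]
      rw [this]
      exact Ismul _ (Ideal.mul_mem_left _ _ (X_mem_rowIdeal i t))
    · -- a < i, b < t : mixed
      have hE := Xmixed (k := k) (q := q) hia htb
      have : X k q m n i t * X k q m n a b
          = X k q m n a b * X k q m n i t - (q - q⁻¹) • (X k q m n a t * X k q m n i b) := by
        rw [← hE, sub_sub_cancel]
      rw [this]
      exact L.sub_mem (Ideal.mul_mem_left _ _ (X_mem_rowIdeal i t))
        (Ismul _ (Ideal.mul_mem_left _ _ (X_mem_rowIdeal i b)))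

theorem rowIdeal_mul_mem (hq : q ≠ 0) (i : Fin m)
    (f : FreeAlgebra k (Fin m × Fin n)) :
    ∀ x ∈ rowIdeal k q m n i,
      x * RingQuot.mkAlgHom k (MatRel k q m n) f ∈ rowIdeal k q m n i := by
  induction f using FreeAlgebra.induction with
  | grade0 r =>
    intro x hx
    rw [AlgHom.commutes]
    rw [show x * algebraMap k (QMat k q m n) r = r • x by
      rw [Algebra.smul_def, Algebra.commutes]]
    exact Ismul _ hx
  | grade1 p =>
    intro x hx
    refine Submodule.span_induction (p := fun x _ =>
      x * RingQuot.mkAlgHom k (MatRel k q m n) (FreeAlgebra.ι k p) ∈ rowIdeal k q m n i)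
      ?_ ?_ ?_ ?_ hx
    · rintro _ ⟨t, rfl⟩
      exact gen_mul_mem hq i t p.1 p.2
    · beta_reduce; rw [zero_mul]; exact (rowIdeal k q m n i).zero_mem
    · intro u v _ _ hu hv
      beta_reduce at hu hv ⊢
      rw [add_mul]; exact (rowIdeal k q m n i).add_mem hu hv
    · intro r u _ hu
      beta_reduce at hu ⊢
      rw [smul_eq_mul, mul_assoc]
      exact Ideal.mul_mem_left _ _ hu
  | add f g hf hg =>
    intro x hx
    rw [map_add, mul_add]
    exact (rowIdeal k q m n i).add_mem (hf x hx) (hg x hx)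
  | mul f g hf hg =>
    intro x hx
    rw [map_mul, ← mul_assoc]
    exact hg _ (hf x hx)

theorem mem_rowIdeal_mul (hq : q ≠ 0) (i : Fin m) {x : QMat k q m n}
    (hx : x ∈ rowIdeal k q m n i) (z : QMat k q m n) :
    x * z ∈ rowIdeal k q m n i := by
  obtain ⟨f, rfl⟩ := RingQuot.mkAlgHom_surjective k (MatRel k q m n) z
  exact rowIdeal_mul_mem hq i f x hx

/-- The key sandwich lemma: `X i t * z * X s j ∈ P` for every `z`. -/
theorem sandwich {P : TwoSidedIdeal (QMat k q m n)} (hq : q ≠ 0)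
    (hI : I₁ k q m n ≤ P) {i : Fin m} {j : Fin n} (hij : X k q m n i j ∈ P)
    (t : Fin n) (s : Fin m) (z : QMat k q m n) :
    X k q m n i t * z * X k q m n s j ∈ P := by
  have h1 : X k q m n i t * z ∈ rowIdeal k q m n i :=
    mem_rowIdeal_mul hq i (X_mem_rowIdeal i t) z
  refine Submodule.span_induction (p := fun x _ => x * X k q m n s j ∈ P) ?_ ?_ ?_ ?_ h1
  · rintro _ ⟨t', rfl⟩
    exact prod_mem hq hI hij t' s
  · beta_reduce; rw [zero_mul]; exact P.zero_mem
  · intro u v _ _ hu hv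
    beta_reduce at hu hv ⊢
    rw [add_mul]; exact P.add_mem hu hv
  · intro r u _ hu
    beta_reduce at hu ⊢
    rw [smul_eq_mul, mul_assoc]
    exact P.mul_mem_left _ _ hu

end QMatAux

/-- Over an infinite field, if `P` is an `H`-prime ideal of
`O_q(M_{m,n}(k))` containing `I₁`, then `X i j ∈ P` iff all of row `i` or all of column `j`
lies in `P`. -/
theorem mem_HPrime_iff_row_or_col (k : Type) [Field k] [Infinite k] (q : k) (hq : q ≠ 0)
    (m n : ℕ) (P : TwoSidedIdeal (QMat k q m n))
    (hP : IsHPrime k q m n P) (hI : I₁ k q m n ≤ P) (i : Fin m) (j : Fin n) :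
    X k q m n i j ∈ P ↔
      (∀ t : Fin n, X k q m n i t ∈ P) ∨ (∀ s : Fin m, X k q m n s j ∈ P) := by
  constructor
  · intro hij
    classical
    set Q : TwoSidedIdeal (QMat k q m n) :=
      TwoSidedIdeal.span (Set.range (X k q m n i)) with hQdef
    set R : TwoSidedIdeal (QMat k q m n) :=
      TwoSidedIdeal.span (Set.range (fun s => X k q m n s j)) with hRdef
    have hgenQ : ∀ t, X k q m n i t ∈ Q := fun t =>
      TwoSidedIdeal.subset_span ⟨t, rfl⟩
    have hgenR : ∀ s, X k q m n s j ∈ R := fun s =>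
      TwoSidedIdeal.subset_span ⟨s, rfl⟩
    -- H-invariance of Q and R
    have hinv : ∀ (S : Set (QMat k q m n)) (φ : QMat k q m n ≃ₐ[k] QMat k q m n),
        (∀ x ∈ S, φ x ∈ TwoSidedIdeal.span S) →
        ∀ a ∈ TwoSidedIdeal.span S, φ a ∈ TwoSidedIdeal.span S := by
      intro S φ hS a ha
      set T : TwoSidedIdeal (QMat k q m n) :=
        TwoSidedIdeal.mk' {x | φ x ∈ TwoSidedIdeal.span S}
          (by simp only [Set.mem_setOf_eq, map_zero]; exact TwoSidedIdeal.zero_mem _)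
          (fun {x y} hx hy => by
            simp only [Set.mem_setOf_eq, map_add] at hx hy ⊢
            exact TwoSidedIdeal.add_mem _ hx hy)
          (fun {x} hx => by
            simp only [Set.mem_setOf_eq, map_neg] at hx ⊢
            exact TwoSidedIdeal.neg_mem _ hx)
          (fun {x y} hy => by
            simp only [Set.mem_setOf_eq, map_mul] at hy ⊢
            exact TwoSidedIdeal.mul_mem_left _ _ _ hy)
          (fun {x y} hx => by
            simp only [Set.mem_setOf_eq, map_mul] at hx ⊢
            exact TwoSidedIdeal.mul_mem_right _ _ _ hx) with hTdef
      have := TwoSidedIdeal.mem_span_iff.mp ha T (by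
        intro x hx
        rw [SetLike.mem_coe, hTdef, TwoSidedIdeal.mem_mk']
        exact hS x hx)
      rw [hTdef, TwoSidedIdeal.mem_mk'] at this
      exact this
    have hQinv : IsHInvariant k q m n Q := by
      intro α β φ hφ a ha
      refine hinv _ φ ?_ a ha
      rintro _ ⟨t, rfl⟩
      rw [hφ i t]
      exact QMatAux.Psmul _ (TwoSidedIdeal.subset_span ⟨t, rfl⟩)
    have hRinv : IsHInvariant k q m n R := by
      intro α β φ hφ a ha
      refine hinv _ φ ?_ a ha
      rintro _ ⟨s, rfl⟩
      rw [hφ s j]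
      exact QMatAux.Psmul _ (TwoSidedIdeal.subset_span ⟨s, rfl⟩)
    -- QR ⊆ P
    have hRkey : ∀ b ∈ R, ∀ (t : Fin n) (z : QMat k q m n),
        X k q m n i t * z * b ∈ P := by
      intro b hb
      set T : TwoSidedIdeal (QMat k q m n) :=
        TwoSidedIdeal.mk' {b | ∀ (t : Fin n) (z : QMat k q m n),
            X k q m n i t * z * b ∈ P}
          (by intro t z; rw [mul_zero]; exact P.zero_mem)
          (fun {x y} hx hy t z => by
            rw [mul_add]; exact P.add_mem (hx t z) (hy t z))
          (fun {x} hx t z => by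
            rw [QMatAux.mulNeg]
            exact P.neg_mem (hx t z))
          (fun {x y} hy t z => by
            rw [show X k q m n i t * z * (x * y) = X k q m n i t * (z * x) * y by
              simp only [mul_assoc]]
            exact hy t (z * x))
          (fun {x y} hx t z => by
            rw [show X k q m n i t * z * (x * y) = X k q m n i t * z * x * y by
              simp only [mul_assoc]]
            exact P.mul_mem_right _ _ (hx t z)) with hTdef
      have := TwoSidedIdeal.mem_span_iff.mp hb T (by
        rintro _ ⟨s, rfl⟩
        rw [SetLike.mem_coe, hTdef, TwoSidedIdeal.mem_mk']
        intro t z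
        exact QMatAux.sandwich hq hI hij t s z)
      rw [hTdef, TwoSidedIdeal.mem_mk'] at this
      exact this
    have hQR : ∀ a ∈ Q, ∀ b ∈ R, a * b ∈ P := by
      intro a ha
      set T : TwoSidedIdeal (QMat k q m n) :=
        TwoSidedIdeal.mk' {a | ∀ b ∈ R, a * b ∈ P}
          (by intro b _; rw [zero_mul]; exact P.zero_mem)
          (fun {x y} hx hy b hb => by
            rw [add_mul]; exact P.add_mem (hx b hb) (hy b hb))
          (fun {x} hx b hb => by
            rw [QMatAux.negMul]
            exact P.neg_mem (hx b hb))
          (fun {x y} hy b hb => by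
            rw [mul_assoc]; exact P.mul_mem_left _ _ (hy b hb))
          (fun {x y} hx b hb => by
            rw [mul_assoc]; exact hx (y * b) (R.mul_mem_left _ _ hb)) with hTdef
      have := TwoSidedIdeal.mem_span_iff.mp ha T (by
        rintro _ ⟨t, rfl⟩
        rw [SetLike.mem_coe, hTdef, TwoSidedIdeal.mem_mk']
        intro b hb
        have := hRkey b hb t 1
        rwa [mul_one] at this)
      rw [hTdef, TwoSidedIdeal.mem_mk'] at this
      exact this
    rcases hP.2.2 Q R hQinv hRinv hQR with h | h
    · exact Or.inl fun t => h (hgenQ t)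
    · exact Or.inr fun s => h (hgenR s)
  · rintro (h | h)
    · exact h j
    · exact h i
end
end
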